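/- arXiv:2412.11316 — 13 statements merged into one kernel-verified Lean document; each statement's English description precedes it below -/
import Mathlib

section
/- Let (I,J,K) be a hypercomplex structure on R^{4k}, i.e. I,J,K are complex structures with IJ = -JI = K, and let h be a Lie subalgebra of gl(4k,R) commuting with I, J and K. Then: (1) every nonzero F ∈ h has rank at least 4 (in particular at least 3, so h is super-elliptic); (2) h ∩ Ih = {0}, i.e. h is totally real with respect to I. -/
/-!
`I`, `J`, `K` are the images of the quaternion units under an algebra map `ℍ[ℝ] → End ℝ⁴ᵏ`.
An endomorphism `F` commuting with `I`, `J`, `K` commutes with the whole image, so its range is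
stable under the quaternions. A nonzero quaternion acts invertibly (`q̄ q = |q|²`), hence for
`v ≠ 0` in the range, `q ↦ q • v` embeds the four-dimensional `ℍ[ℝ]` into it.
If `F = I G` with `F`, `G` commuting with `J`, then `IJG = J(IG) = (JI)G = -IJG`, so `IJG = 0`
and `G = 0` because `I` and `J` are invertible.
-/

attribute [local instance 100] LieRing.ofAssociativeRing

namespace QuaternionAlgebra.Basis

variable {R A : Type*} [CommRing R] [Ring A] [Algebra R A]

def ofHypercomplex (I J K : A) (hI : I * I = -1) (hJ : J * J = -1) (hIJ : I * J = K)
    (hJI : J * I = -K) : Basis A (-1 : R) 0 (-1) where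
  i := I
  j := J
  k := K
  i_mul_i := by simp [hI]
  j_mul_j := by simp [hJ]
  i_mul_j := hIJ
  j_mul_i := by simp [hJI]

theorem commute_liftHom {c₁ c₂ c₃ : R} (B : Basis A c₁ c₂ c₃) {a : A}
    (hi : Commute a B.i) (hj : Commute a B.j) (hk : Commute a B.k)
    (q : QuaternionAlgebra R c₁ c₂ c₃) : Commute a (B.liftHom q) :=
  Algebra.commute_of_mem_adjoin_of_forall_mem_commute
    (B.range_liftHom.le (AlgHom.mem_range_self _ q)) (by rintro _ (rfl | rfl | rfl) <;> assumption)

end QuaternionAlgebra.Basis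

namespace Quaternion

variable {R V : Type*} [Field R] [LinearOrder R] [IsStrictOrderedRing R]
  [AddCommGroup V] [Module R V]

theorem injective_algHom_apply (φ : ℍ[R] →ₐ[R] Module.End R V) {v : V} (hv : v ≠ 0) :
    Function.Injective (LinearMap.applyₗ v ∘ₗ φ.toLinearMap) := by
  rw [← LinearMap.ker_eq_bot, LinearMap.ker_eq_bot']
  intro q hq
  have hnorm : (normSq q : R) • v = 0 := by
    have := congrArg (φ (star q)) hq
    simp only [LinearMap.comp_apply, LinearMap.applyₗ_apply_apply, AlgHom.toLinearMap_apply,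
      map_zero] at this
    rwa [← Module.End.mul_apply, ← map_mul, star_mul_self, ← algebraMap_def, AlgHom.commutes,
      Module.algebraMap_end_apply] at this
  exact normSq_eq_zero.mp ((smul_eq_zero.mp hnorm).resolve_right hv)

theorem four_le_finrank_of_algHom_mapsTo [FiniteDimensional R V]
    (φ : ℍ[R] →ₐ[R] Module.End R V) {W : Submodule R V} (hW : ∀ q, Set.MapsTo (φ q) W W)
    (hW0 : W ≠ ⊥) : 4 ≤ Module.finrank R W := by
  obtain ⟨w, hwW, hw⟩ := W.ne_bot_iff.mp hW0
  let f : ℍ[R] →ₗ[R] W :=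
    LinearMap.codRestrict W (LinearMap.applyₗ w ∘ₗ φ.toLinearMap) fun q => hW q hwW
  have hf : Function.Injective f := fun p q hpq =>
    injective_algHom_apply φ hw (congrArg Subtype.val hpq)
  simpa [finrank_eq_four] using LinearMap.finrank_le_finrank_of_injective hf

end Quaternion

theorem isUnit_of_mul_self_eq_neg_one {A : Type*} [Ring A] {I : A} (hI : I * I = -1) :
    IsUnit I :=
  ⟨⟨I, -I, by rw [mul_neg, hI, neg_neg], by rw [neg_mul, hI, neg_neg]⟩, rfl⟩

theorem eq_zero_of_commute_of_mul_anticomm {R A : Type*} [Field R] [CharZero R] [Ring A]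
    [Algebra R A] {I J G : A} (hI : IsUnit I) (hJ : IsUnit J) (hJI : J * I = -(I * J))
    (hG : Commute J G) (hIG : Commute J (I * G)) : G = 0 := by
  have hneg : I * J * G = -(I * J * G) :=
    calc I * J * G = J * (I * G) := by rw [hIG.eq, mul_assoc I G J, ← hG.eq, ← mul_assoc]
      _ = -(I * J * G) := by rw [← mul_assoc, hJI, neg_mul]
  have hIJG : I * J * G = 0 := by
    have : (2 : R) • (I * J * G) = 0 := by
      rw [two_smul]
      nth_rewrite 1 [hneg]
      exact neg_add_cancel _
    simpa using this
  exact (hI.mul hJ).mul_right_eq_zero.mp hIJG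

theorem stmt_1_general {k : ℕ}
    (I J K : Module.End ℝ (Fin (4*k) → ℝ))
    (hI : I * I = -1) (hJ : J * J = -1)
    (hIJ : I * J = K) (hJI : J * I = -K)
    (h : LieSubalgebra ℝ (Module.End ℝ (Fin (4*k) → ℝ)))
    (hcI : ∀ F ∈ h, F * I = I * F) (hcJ : ∀ F ∈ h, F * J = J * F)
    (hcK : ∀ F ∈ h, F * K = K * F) :
    (∀ F ∈ h, F ≠ 0 → 4 ≤ Module.finrank ℝ ↥(LinearMap.range F)) ∧
    (∀ F ∈ h, ∀ G ∈ h, F = I * G → F = 0) := by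
  let B := QuaternionAlgebra.Basis.ofHypercomplex (R := ℝ) I J K hI hJ hIJ hJI
  refine ⟨fun F hF hF0 => ?_, fun F hF G hG hFG => ?_⟩
  · refine Quaternion.four_le_finrank_of_algHom_mapsTo B.liftHom ?_
      (LinearMap.range_eq_bot.not.mpr hF0)
    rintro q _ ⟨u, rfl⟩
    exact ⟨B.liftHom q u,
      LinearMap.congr_fun (B.commute_liftHom (hcI F hF) (hcJ F hF) (hcK F hF) q) u⟩
  · have hG0 : G = 0 := eq_zero_of_commute_of_mul_anticomm (R := ℝ)
      (isUnit_of_mul_self_eq_neg_one hI) (isUnit_of_mul_self_eq_neg_one hJ) (by rw [hJI, hIJ])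
      (hcJ G hG).symm (hFG ▸ (hcJ F hF).symm)
    rw [hFG, hG0, mul_zero]

theorem stmt_1 {k : ℕ}
    (I J K : Module.End ℝ (Fin (4*k) → ℝ))
    (hI : I * I = -1) (hJ : J * J = -1) (hK : K * K = -1)
    (hIJ : I * J = K) (hJI : J * I = -K)
    (h : LieSubalgebra ℝ (Module.End ℝ (Fin (4*k) → ℝ)))
    (hcI : ∀ F ∈ h, F * I = I * F) (hcJ : ∀ F ∈ h, F * J = J * F)
    (hcK : ∀ F ∈ h, F * K = K * F) :
    (∀ F ∈ h, F ≠ 0 → 4 ≤ Module.finrank ℝ ↥(LinearMap.range F)) ∧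
    (∀ F ∈ h, ∀ G ∈ h, F = I * G → F = 0) :=
  stmt_1_general I J K hI hJ hIJ hJI h hcI hcJ hcK
end

section
/- Let g be a nondegenerate symmetric bilinear form on R^n, let h ⊆ so(g) be a Lie subalgebra of g-skew-symmetric endomorphisms, and suppose h is super-elliptic (contains no nonzero element of rank ≤ 2). Then the first prolongation of the tableau K_h = {F restricted to R^{n-1} : F ∈ h} vanishes: every symmetric bilinear map ∇ : R^{n-1} × R^{n-1} → R^n such that for each u ∈ R^{n-1} the map ∇_u extends to an element of h is zero. -/
attribute [local instance 100] LieRing.ofAssociativeRing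

/-!
The trilinear form `(u, v, w) ↦ g (∇ u v) w` on `ℝⁿ⁻¹` is symmetric in `(u, v)` and, by skewness of
the extensions, antisymmetric in `(v, w)`; hence it vanishes, i.e. `∇ u v` is `g`-orthogonal to the
hyperplane `ℝⁿ⁻¹`. By nondegeneracy that orthogonal is at most a line, so the extension `F` of `∇ u`
maps `ℝⁿ⁻¹` into a line and has rank at most `2`. Super-ellipticity forces `F = 0`, so `∇ u = 0`.
-/

open Module

theorem eq_zero_of_symm_of_antisymm {α G : Type*} [AddGroup G] [IsAddTorsionFree G]
    (T : α → α → α → G) (hsymm : ∀ u v w, T u v w = T v u w)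
    (hanti : ∀ u v w, T u v w = -T u w v) (u v w : α) : T u v w = 0 := by
  refine self_eq_neg.mp ?_
  calc T u v w = T v u w := hsymm u v w
    _ = -T v w u := hanti v u w
    _ = -T w v u := by rw [hsymm]
    _ = T w u v := by rw [hanti w v u, neg_neg]
    _ = T u w v := hsymm w u v
    _ = -T u v w := by rw [hanti u v w, neg_neg]

section FiniteDimensional

variable {K V V' : Type*} [Field K] [AddCommGroup V] [Module K V] [AddCommGroup V'] [Module K V']

theorem Submodule.finrank_sup_span_singleton_le [FiniteDimensional K V] (p : Submodule K V)
    (v : V) : finrank K ↥(p ⊔ K ∙ v) ≤ finrank K p + 1 := by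
  calc finrank K ↥(p ⊔ K ∙ v) ≤ finrank K p + finrank K ↥(K ∙ v) :=
        finrank_add_le_finrank_add_finrank _ _
    _ ≤ finrank K p + 1 := by
        gcongr
        simpa using finrank_span_le_card (R := K) ({v} : Set V)

theorem LinearMap.BilinForm.finrank_orthogonal_le_one [FiniteDimensional K V]
    {B : LinearMap.BilinForm K V} (hB : B.Nondegenerate) {W : Submodule K V} {e : V}
    (hW : W ⊔ K ∙ e = ⊤) : finrank K (B.orthogonal W) ≤ 1 := by
  have hV := W.finrank_sup_span_singleton_le e
  rw [hW, finrank_top] at hV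
  rw [LinearMap.BilinForm.finrank_orthogonal hB]
  omega

theorem LinearMap.finrank_range_le_of_map_le [FiniteDimensional K V'] (F : V →ₗ[K] V')
    {W : Submodule K V} {e : V} (hW : W ⊔ K ∙ e = ⊤) {Q : Submodule K V'} (hF : W.map F ≤ Q) :
    finrank K (LinearMap.range F) ≤ finrank K Q + 1 := by
  have hrange : LinearMap.range F ≤ Q ⊔ K ∙ F e := by
    rw [← Submodule.map_top, ← hW, Submodule.map_sup, Submodule.map_span, Set.image_singleton]
    exact sup_le_sup_right hF _
  exact (Submodule.finrank_mono hrange).trans (Q.finrank_sup_span_singleton_le (F e))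

end FiniteDimensional

theorem LinearMap.ker_proj_sup_span_single_eq_top {ι K : Type*} [DecidableEq ι] [Field K]
    (i : ι) : LinearMap.ker (LinearMap.proj i : (ι → K) →ₗ[K] K) ⊔ K ∙ Pi.single i 1 = ⊤ := by
  refine eq_top_iff.mpr fun x _ => ?_
  have hx : x = (x - x i • Pi.single i 1) + x i • Pi.single i 1 := by abel
  rw [hx]
  refine Submodule.add_mem_sup ?_ (Submodule.smul_mem _ _ (Submodule.mem_span_singleton_self _))
  simp

theorem LinearMap.BilinForm.apply_mem_orthogonal_of_exists_skew_extension {K V : Type*} [Field K]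
    [CharZero K] [AddCommGroup V] [Module K V] {B : LinearMap.BilinForm K V}
    (hB : ∀ x y, B x y = B y x) {W : Submodule K V} (D : W →ₗ[K] W →ₗ[K] V)
    (hD : ∀ u w, D u w = D w u)
    (hext : ∀ u, ∃ F : Module.End K V, (∀ x y, B (F x) y = -B x (F y)) ∧ ∀ w : W, F w = D u w)
    (u v : W) : D u v ∈ B.orthogonal W := by
  have hanti : ∀ u v w : W, B (D u v) w = -B (D u w) v := fun u v w => by
    obtain ⟨F, hskew, hF⟩ := hext u
    rw [← hF v, ← hF w, hskew, hB]
  intro w hw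
  rw [hB]
  exact eq_zero_of_symm_of_antisymm (fun u v w : W => B (D u v) w) (fun u v w => by rw [hD])
    hanti u v ⟨w, hw⟩

theorem stmt_3 {n : ℕ}
    (g : (Fin (n+1) → ℝ) →ₗ[ℝ] (Fin (n+1) → ℝ) →ₗ[ℝ] ℝ)
    (hnd : ∀ x, (∀ y, g x y = 0) → x = 0)
    (hsymm : ∀ x y, g x y = g y x)
    (h : LieSubalgebra ℝ (Module.End ℝ (Fin (n+1) → ℝ)))
    (hskew : ∀ F ∈ h, ∀ x y, g (F x) y = - g x (F y))
    (hse : ∀ F ∈ h, Module.finrank ℝ ↥(LinearMap.range F) ≤ 2 → F = 0)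
    (P : Submodule ℝ (Fin (n+1) → ℝ))
    (hP : P = LinearMap.ker (LinearMap.proj (Fin.last n) : (Fin (n+1) → ℝ) →ₗ[ℝ] ℝ))
    (D : P →ₗ[ℝ] P →ₗ[ℝ] (Fin (n+1) → ℝ))
    (hsymD : ∀ u w : P, D u w = D w u)
    (hext : ∀ u : P, ∃ F ∈ h, ∀ w : P, F (w : Fin (n+1) → ℝ) = D u w) :
    D = 0 := by
  have hP_compl : P ⊔ ℝ ∙ Pi.single (Fin.last n) 1 = ⊤ :=
    hP ▸ LinearMap.ker_proj_sup_span_single_eq_top (Fin.last n)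
  have hg : LinearMap.BilinForm.Nondegenerate g :=
    (LinearMap.IsRefl.nondegenerate_iff_separatingLeft fun x y hxy => by rwa [hsymm]).mpr hnd
  have hD_orth := LinearMap.BilinForm.apply_mem_orthogonal_of_exists_skew_extension hsymm D hsymD
    fun u => (hext u).imp fun F ⟨hF, hFD⟩ => ⟨hskew F hF, hFD⟩
  ext u w
  obtain ⟨F, hF, hFD⟩ := hext u
  have hF_map : P.map F ≤ LinearMap.BilinForm.orthogonal g P := by
    rintro _ ⟨v, hv, rfl⟩
    exact hFD ⟨v, hv⟩ ▸ hD_orth u ⟨v, hv⟩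
  have hrank : finrank ℝ (LinearMap.range F) ≤ 2 :=
    (F.finrank_range_le_of_map_le hP_compl hF_map).trans
      (by have := LinearMap.BilinForm.finrank_orthogonal_le_one hg hP_compl; omega)
  simp [← hFD w, hse F hF hrank]
end

section
/- Let J be a complex structure on R^{2m} and h ⊆ gl(J) a totally real Lie subalgebra (h ∩ Jh = {0}). Let W = R^{2m-1} ∩ J(R^{2m-1}) where R^{2m-1} is the span of the first 2m-1 standard basis vectors. Then every element of the first prolongation K_h^{(1)} of the tableau K_h vanishes on W in both arguments; i.e., K_h^{(1)} ⊆ S^2(W^0) ⊗ R^{2m}, where W^0 ⊆ (R^{2m-1})* is the annihilator of W. -/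
/-! A hyperplane `P` in a space with complex structure `J` has odd dimension, so it is not
`J`-stable and `P + J P` is the whole space. If `J u ∈ P`, symmetry of `D` and `F J = J F` give
`D (J u) = J ∘ D u` on `P`. The elements of `h` extending both sides commute with `J`, hence agree
on `P + J P`: the extension of `D (J u)` is `J` times that of `D u`, and total reality makes both
vanish. -/

attribute [local instance 100] LieRing.ofAssociativeRing

open Module

theorem isUnit_of_mul_self_eq_neg_one_s5 {R : Type*} [Ring R] {J : R} (hJ : J * J = -1) :
    IsUnit J :=
  ⟨⟨J, -J, by rw [mul_neg, hJ, neg_neg], by rw [neg_mul, hJ, neg_neg]⟩, rfl⟩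

section ComplexStructure

variable {K V : Type*} [Field K] [LinearOrder K] [IsStrictOrderedRing K]
  [AddCommGroup V] [Module K V] [FiniteDimensional K V] {J : End K V}

theorem Module.End.even_finrank_of_mul_self_eq_neg_one (hJ : J * J = -1) :
    Even (finrank K V) := by
  by_contra hodd
  have hdet : LinearMap.det J * LinearMap.det J = -1 := by
    rw [← map_mul, hJ, ← neg_one_smul K (1 : End K V), LinearMap.det_smul, map_one, mul_one,
      (Nat.not_even_iff_odd.mp hodd).neg_one_pow]
  nlinarith [mul_self_nonneg (LinearMap.det J)]

theorem Submodule.not_map_le_of_odd_finrank (hJ : J * J = -1) {P : Submodule K V}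
    (hodd : Odd (finrank K P)) : ¬ P.map J ≤ P := by
  intro hle
  let JP : End K P := J.restrict fun x hx => hle ⟨x, hx, rfl⟩
  have hJP : JP * JP = -1 := by
    ext x
    simpa [JP] using congr($hJ x)
  exact Nat.not_even_iff_odd.mpr hodd (End.even_finrank_of_mul_self_eq_neg_one hJP)

theorem Submodule.codisjoint_map_of_finrank_add_one (hJ : J * J = -1) {P : Submodule K V}
    (hcodim : finrank K P + 1 = finrank K V) : Codisjoint P (P.map J) := by
  have hodd : Odd (finrank K P) := by
    have := End.even_finrank_of_mul_self_eq_neg_one hJ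
    rwa [← hcodim, Nat.even_add_one, Nat.not_even_iff_odd] at this
  rw [codisjoint_iff]
  by_contra hne
  have hlt : finrank K ↥(P ⊔ P.map J) < finrank K V := Submodule.finrank_lt hne
  have heq : P = P ⊔ P.map J := Submodule.eq_of_le_of_finrank_le le_sup_left (by omega)
  exact Submodule.not_map_le_of_odd_finrank hJ hodd (le_sup_right.trans heq.ge)

end ComplexStructure

section Prolongation

variable {R V : Type*} [CommRing R] [AddCommGroup V] [Module R V] {J : End R V}
  {P : Submodule R V}

theorem Module.End.eq_of_eqOn_of_codisjoint_map {A B : End R V} (hA : A * J = J * A)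
    (hB : B * J = J * B) (hP : Codisjoint P (P.map J)) (hAB : Set.EqOn A B P) : A = B := by
  refine LinearMap.ext_on_codisjoint hP hAB ?_
  rintro _ ⟨x, hx, rfl⟩
  change (A * J) x = (B * J) x
  rw [hA, hB, Module.End.mul_apply, Module.End.mul_apply, hAB hx]

theorem LinearMap.apply_eq_map_apply_of_symm_of_extends {S : Set (End R V)} (hcomm : ∀ F ∈ S, F * J = J * F)
    {D : P →ₗ[R] P →ₗ[R] V} (hsymD : ∀ u w : P, D u w = D w u)
    (hext : ∀ u : P, ∃ F ∈ S, ∀ w : P, F w = D u w) {u v : P} (hv : (v : V) = J u) (w : P) :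
    D v w = J (D u w) := by
  obtain ⟨F, hF, hFD⟩ := hext w
  calc D v w = F v := by rw [hsymD, hFD]
    _ = J (F u) := by rw [hv, ← Module.End.mul_apply, hcomm F hF, Module.End.mul_apply]
    _ = J (D u w) := by rw [hFD, hsymD]

end Prolongation

theorem stmt_5 {m : ℕ}
    (J : Module.End ℝ (Fin (2*m+2) → ℝ)) (hJ : J * J = -1)
    (h : LieSubalgebra ℝ (Module.End ℝ (Fin (2*m+2) → ℝ)))
    (hcomm : ∀ F ∈ h, F * J = J * F)
    (htr : ∀ F ∈ h, ∀ G ∈ h, F = J * G → F = 0)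
    (P : Submodule ℝ (Fin (2*m+2) → ℝ))
    (hP : P = LinearMap.ker
      (LinearMap.proj (⟨2*m+1, by omega⟩ : Fin (2*m+2)) : (Fin (2*m+2) → ℝ) →ₗ[ℝ] ℝ))
    (D : P →ₗ[ℝ] P →ₗ[ℝ] (Fin (2*m+2) → ℝ))
    (hsymD : ∀ u w : P, D u w = D w u)
    (hext : ∀ u : P, ∃ F ∈ h, ∀ w : P, F (w : Fin (2*m+2) → ℝ) = D u w) :
    ∀ u : P, J (u : Fin (2*m+2) → ℝ) ∈ P → ∀ w : P, D u w = 0 := by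
  intro u hu w
  have hcodim : finrank ℝ P + 1 = finrank ℝ (Fin (2*m+2) → ℝ) := by
    subst hP
    refine Module.Dual.finrank_ker_add_one_of_ne_zero fun h0 => ?_
    simpa using congr($h0 fun _ => 1)
  obtain ⟨F, hF, hFD⟩ := hext u
  obtain ⟨G, hG, hGD⟩ := hext ⟨J u, hu⟩
  have hGJF : G = J * F := by
    refine Module.End.eq_of_eqOn_of_codisjoint_map (hcomm G hG) (by rw [mul_assoc, hcomm F hF])
      (Submodule.codisjoint_map_of_finrank_add_one hJ hcodim) fun x hx => ?_
    rw [hGD ⟨x, hx⟩, LinearMap.apply_eq_map_apply_of_symm_of_extends hcomm hsymD hext rfl, Module.End.mul_apply,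
      ← hFD ⟨x, hx⟩]
  have hF0 : F = 0 :=
    (isUnit_of_mul_self_eq_neg_one_s5 hJ).mul_right_eq_zero.mp (hGJF ▸ htr G hG F hF hGJF)
  rw [← hFD w, hF0, LinearMap.zero_apply]
end

section
/- Let h ⊆ gl(n,R) be a Lie subalgebra such that the first prolongation K_h^{(1)} of its tableau vanishes and such that h is elliptic (contains no nonzero element of rank ≤ 1). Then the first prolongation h^{(1)} of h vanishes: every symmetric bilinear map ∇ : R^n × R^n → R^n with ∇_x ∈ h for all x ∈ R^n is zero. -/
attribute [local instance 100] LieRing.ofAssociativeRing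

/-
A symmetric `∇` with values in `h` restricts on the hyperplane `P = {xₙ = 0}` to an element of
`K_h^{(1)}`, hence vanishes on `P × P`. So for `u ∈ P` the map `∇_u ∈ h` kills `P`, has rank
at most one, and is zero by ellipticity. By symmetry `∇_e` then also kills `P` for the last basis
vector `e`, so `∇_e = 0` as well, and `∇` vanishes on `P + ℝe`, which is everything.
-/

open Module Submodule

theorem ker_proj_sup_span_single {R ι : Type*} [Ring R] [DecidableEq ι] (i : ι) :
    LinearMap.ker (LinearMap.proj i : (ι → R) →ₗ[R] R) ⊔ R ∙ Pi.single i 1 = ⊤ := by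
  refine eq_top_iff.2 fun x _ ↦ mem_sup.2 ⟨x - x i • Pi.single i 1, ?_, x i • Pi.single i 1,
    mem_span_singleton.2 ⟨x i, rfl⟩, sub_add_cancel _ _⟩
  simp

section Hyperplane

variable {K V W : Type*} [Field K] [AddCommGroup V] [Module K V] [AddCommGroup W] [Module K W]
  {P : Submodule K V} {e : V}

theorem LinearMap.eq_zero_of_le_ker_of_apply_eq_zero (hPe : P ⊔ K ∙ e = ⊤) {F : V →ₗ[K] W}
    (hP : P ≤ LinearMap.ker F) (he : F e = 0) : F = 0 := by
  rw [← LinearMap.ker_eq_top, eq_top_iff, ← hPe]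
  exact sup_le hP ((span_singleton_le_iff_mem _ _).2 he)

theorem LinearMap.finrank_range_le_one_of_le_ker (hPe : P ⊔ K ∙ e = ⊤) {F : V →ₗ[K] W}
    (hP : P ≤ LinearMap.ker F) : finrank K (LinearMap.range F) ≤ 1 := by
  have hrange : LinearMap.range F = K ∙ F e := by
    rw [LinearMap.range_eq_map, ← hPe, Submodule.map_sup, LinearMap.le_ker_iff_map.1 hP,
      bot_sup_eq, map_span, Set.image_singleton]
  rw [hrange]
  simpa using finrank_span_le_card ({F e} : Set W)

theorem eq_zero_of_elliptic_of_eq_zero_on_hyperplane (hPe : P ⊔ K ∙ e = ⊤)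
    {S : Set (Module.End K V)} (hS : ∀ F ∈ S, finrank K (LinearMap.range F) ≤ 1 → F = 0)
    {D : V →ₗ[K] Module.End K V} (hsym : ∀ x y, D x y = D y x) (hD : ∀ x, D x ∈ S)
    (hPP : ∀ u ∈ P, ∀ w ∈ P, D u w = 0) : D = 0 := by
  have hDP : P ≤ LinearMap.ker D := fun u hu ↦
    hS _ (hD u) (LinearMap.finrank_range_le_one_of_le_ker hPe fun w hw ↦ hPP u hu w hw)
  have hDe : D e = 0 := hS _ (hD e) <| LinearMap.finrank_range_le_one_of_le_ker hPe fun u hu ↦ by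
    rw [LinearMap.mem_ker, hsym, hDP hu, LinearMap.zero_apply]
  exact LinearMap.eq_zero_of_le_ker_of_apply_eq_zero hPe hDP hDe

end Hyperplane

theorem stmt_6 {n : ℕ}
    (h : LieSubalgebra ℝ (Module.End ℝ (Fin (n+1) → ℝ)))
    (P : Submodule ℝ (Fin (n+1) → ℝ))
    (hP : P = LinearMap.ker (LinearMap.proj (Fin.last n) : (Fin (n+1) → ℝ) →ₗ[ℝ] ℝ))
    (hK1 : ∀ D : P →ₗ[ℝ] P →ₗ[ℝ] (Fin (n+1) → ℝ), (∀ u w : P, D u w = D w u) →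
      (∀ u : P, ∃ F ∈ h, ∀ w : P, F (w : Fin (n+1) → ℝ) = D u w) → D = 0)
    (hell : ∀ F ∈ h, Module.finrank ℝ ↥(LinearMap.range F) ≤ 1 → F = 0) :
    ∀ D : (Fin (n+1) → ℝ) →ₗ[ℝ] Module.End ℝ (Fin (n+1) → ℝ),
      (∀ x y, D x y = D y x) → (∀ x, D x ∈ h) → D = 0 := by
  intro D hsym hmem
  have hPe : P ⊔ ℝ ∙ Pi.single (Fin.last n) 1 = ⊤ := hP ▸ ker_proj_sup_span_single _
  have hres : (D.compl₂ P.subtype).comp P.subtype = 0 :=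
    hK1 _ (fun u w ↦ hsym u w) fun u ↦ ⟨D u, hmem u, fun _ ↦ rfl⟩
  refine eq_zero_of_elliptic_of_eq_zero_on_hyperplane hPe hell hsym hmem fun u hu w hw ↦ ?_
  exact LinearMap.congr_fun₂ hres ⟨u, hu⟩ ⟨w, hw⟩
end

section
/- Let T_0 ∈ End(R^{2m}) be the standard nilpotent endomorphism with T_0(e_i) = e_{m+i} for i ≤ m and T_0(e_{m+i}) = 0 (so T_0^2 = 0 and ker T_0 = im T_0). Then the action of GL(T_0) = {S ∈ GL(2m,R) : S T_0 = T_0 S} on the Grassmannian of (2m-1)-dimensional subspaces of R^{2m} has exactly two orbits, distinguished by dim(U ∩ ker T_0) ∈ {m-1, m}; representatives are U_1 = span(e_1,...,e_{2m-1}) and U_2 = span(e_1,...,e_{m-1},e_{m+1},...,e_{2m}). -/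
/-- The standard nilpotent endomorphism `T₀(x,y) = (0,x)` of `ℝ^m × ℝ^m`. -/
def nilT0 (m : ℕ) : Module.End ℝ ((Fin m → ℝ) × (Fin m → ℝ)) :=
  (LinearMap.inr ℝ (Fin m → ℝ) (Fin m → ℝ)).comp
    (LinearMap.fst ℝ (Fin m → ℝ) (Fin m → ℝ))

/-- Two subspaces are related iff an invertible linear map commuting with `T₀`
maps one to the other. -/
def glT0Rel (m : ℕ) (U U' : Submodule ℝ ((Fin m → ℝ) × (Fin m → ℝ))) : Prop :=
  ∃ S : ((Fin m → ℝ) × (Fin m → ℝ)) ≃ₗ[ℝ] ((Fin m → ℝ) × (Fin m → ℝ)),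
    (∀ x, S (nilT0 m x) = nilT0 m (S x)) ∧ Submodule.map S.toLinearMap U = U'


/-! Let `g₀` be a nonzero functional on `ℝ^m` (the last coordinate), so that `U₁ = ker (g₀ ∘ snd)`
and `U₂ = ker (g₀ ∘ fst)`. A hyperplane is `U = ker φ` with `φ (x, y) = f x + g y`, and the element
`S = (A 0; B A)` of `GL(T₀)` (here `A.skewProd A B`) maps `ker φ` onto `ker ψ` when `ψ ∘ S = φ`.
Since `GL(ℝ^m)` is transitive on nonzero functionals: if `g ≠ 0`, take `g₀ ∘ A = g` and
`g₀ ∘ B = f` to reach `U₁`; if `g = 0`, then `f ≠ 0`, and `g₀ ∘ A = f`, `B = 0` reach `U₂`.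
As `GL(T₀)` preserves `ker T₀`, it preserves `dim (U ∩ ker T₀)`, which is `m - 1` on `U₁` and `m`
on `U₂`. -/

open Module LinearMap

section LinearAlgebra

variable {K E F : Type*} [Field K] [AddCommGroup E] [Module K E] [AddCommGroup F] [Module K F]

theorem exists_linearEquiv_ker_prod_of_surjective {f : E →ₗ[K] F} (hf : Function.Surjective f) :
    ∃ e : E ≃ₗ[K] ker f × F, ∀ x, (e x).2 = f x := by
  obtain ⟨q, hq⟩ := (ker f).exists_isCompl
  refine ⟨equivProdOfSurjectiveOfIsCompl ((ker f).projectionOnto q hq) f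
    (Submodule.range_projectionOnto hq) (range_eq_top.2 hf) ?_, fun _ => rfl⟩
  rw [Submodule.ker_projectionOnto]
  exact hq.symm

theorem exists_linearEquiv_comp_eq_of_surjective [FiniteDimensional K E] {f g : E →ₗ[K] F}
    (hf : Function.Surjective f) (hg : Function.Surjective g) :
    ∃ A : E ≃ₗ[K] E, f ∘ₗ A = g := by
  obtain ⟨ef, hef⟩ := exists_linearEquiv_ker_prod_of_surjective hf
  obtain ⟨eg, heg⟩ := exists_linearEquiv_ker_prod_of_surjective hg
  have hker : finrank K (ker g) = finrank K (ker f) := by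
    have hf' := finrank_range_add_finrank_ker f
    have hg' := finrank_range_add_finrank_ker g
    rw [range_eq_top.2 hf] at hf'
    rw [range_eq_top.2 hg] at hg'
    omega
  refine ⟨eg.trans (((LinearEquiv.ofFinrankEq _ _ hker).prodCongr (LinearEquiv.refl K F)).trans
    ef.symm), LinearMap.ext fun x => ?_⟩
  simp [← hef, heg]

theorem Submodule.exists_eq_ker_of_finrank_add_one [FiniteDimensional K E] (U : Submodule K E)
    (hU : finrank K U + 1 = finrank K E) : ∃ φ : Dual K E, φ ≠ 0 ∧ U = ker φ := by
  have hlt : U < ⊤ := lt_top_iff_ne_top.2 fun h => by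
    rw [h, finrank_top] at hU
    omega
  obtain ⟨φ, hφ, hUφ⟩ := U.exists_le_ker_of_lt_top hlt
  refine ⟨φ, hφ, Submodule.eq_of_le_of_finrank_eq hUφ ?_⟩
  have := Dual.finrank_ker_add_one_of_ne_zero hφ
  omega

theorem LinearEquiv.map_ker_eq_of_comp_eq {V W : Type*} [AddCommGroup V] [Module K V]
    [AddCommGroup W] [Module K W] (S : V ≃ₗ[K] W) {φ : V →ₗ[K] F} {ψ : W →ₗ[K] F}
    (h : ψ ∘ₗ S.toLinearMap = φ) : (ker φ).map S.toLinearMap = ker ψ := by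
  rw [← h, LinearMap.ker_comp, Submodule.map_comap_eq_of_surjective S.surjective]

theorem Submodule.finrank_bot_prod (q : Submodule K F) :
    finrank K ((⊥ : Submodule K E).prod q) = finrank K q := by
  rw [← Submodule.map_inr]
  exact (Submodule.equivMapOfInjective _ inr_injective q).finrank_eq.symm

end LinearAlgebra

section GLT0

variable {n : ℕ}

local notation "E" => Fin n → ℝ

theorem ker_nilT0 : ker (nilT0 n) = (⊥ : Submodule ℝ E).prod ⊤ := by
  ext ⟨x, y⟩
  simp [nilT0]

theorem glT0Rel.symm {U U' : Submodule ℝ (E × E)} (h : glT0Rel n U U') : glT0Rel n U' U := by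
  obtain ⟨S, hS, rfl⟩ := h
  refine ⟨S.symm, fun x => S.injective ?_, ?_⟩
  · rw [S.apply_symm_apply, hS, S.apply_symm_apply]
  · exact (Submodule.map_symm_eq_iff S).mpr rfl

theorem glT0Rel.trans {U U' U'' : Submodule ℝ (E × E)} (h : glT0Rel n U U')
    (h' : glT0Rel n U' U'') : glT0Rel n U U'' := by
  obtain ⟨S, hS, rfl⟩ := h
  obtain ⟨S', hS', rfl⟩ := h'
  refine ⟨S.trans S', fun x => by simp [hS, hS'], ?_⟩
  rw [LinearEquiv.coe_trans, Submodule.map_comp]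

theorem glT0Rel.finrank_inf_ker_eq {U U' : Submodule ℝ (E × E)} (h : glT0Rel n U U') :
    finrank ℝ ↥(U ⊓ ker (nilT0 n)) = finrank ℝ ↥(U' ⊓ ker (nilT0 n)) := by
  obtain ⟨S, hS, rfl⟩ := h
  have hK : (ker (nilT0 n)).map S.toLinearMap = ker (nilT0 n) := by
    conv_lhs => rw [← LinearEquiv.ker_comp S (nilT0 n)]
    exact S.map_ker_eq_of_comp_eq (LinearMap.ext fun x => (hS x).symm)
  rw [← LinearEquiv.finrank_map_eq S, Submodule.map_inf _ S.injective, hK]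

theorem skewProd_nilT0_comm (A : E ≃ₗ[ℝ] E) (B : E →ₗ[ℝ] E) (x : E × E) :
    A.skewProd A B (nilT0 n x) = nilT0 n (A.skewProd A B x) := by
  simp [nilT0]

theorem glT0Rel_ker_of_comp_skewProd_eq (A : E ≃ₗ[ℝ] E) (B : E →ₗ[ℝ] E) {φ ψ : Dual ℝ (E × E)}
    (h : ψ ∘ₗ (A.skewProd A B).toLinearMap = φ) : glT0Rel n (ker φ) (ker ψ) :=
  ⟨A.skewProd A B, skewProd_nilT0_comm A B, (A.skewProd A B).map_ker_eq_of_comp_eq h⟩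

theorem glT0Rel_top_prod_or_prod_top {g₀ : Dual ℝ E} (hg₀ : g₀ ≠ 0) {U : Submodule ℝ (E × E)}
    (hU : finrank ℝ U + 1 = 2 * n) :
    glT0Rel n U ((⊤ : Submodule ℝ E).prod (ker g₀)) ∨ glT0Rel n U ((ker g₀).prod ⊤) := by
  obtain ⟨φ, hφ, rfl⟩ := U.exists_eq_ker_of_finrank_add_one
    (by rw [hU, finrank_prod, finrank_fin_fun]; ring)
  set f := φ ∘ₗ inl ℝ E E
  set g := φ ∘ₗ inr ℝ E E
  have hφ_apply (x y : E) : φ (x, y) = f x + g y := by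
    rw [← coprod_comp_inl_inr φ]
    rfl
  by_cases hg : g = 0
  · have hf : f ≠ 0 := fun hf => hφ (LinearMap.ext fun ⟨x, y⟩ => by simp [hφ_apply, hf, hg])
    obtain ⟨A, hA⟩ :=
      exists_linearEquiv_comp_eq_of_surjective (LinearMap.surjective hg₀) (LinearMap.surjective hf)
    right
    have : (ker g₀).prod ⊤ = ker (g₀ ∘ₗ fst ℝ E E) := by ext; simp
    rw [this]
    refine glT0Rel_ker_of_comp_skewProd_eq A 0 (LinearMap.ext fun ⟨x, y⟩ => ?_)
    simpa [hφ_apply, hg] using DFunLike.congr_fun hA x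
  · obtain ⟨A, hA⟩ :=
      exists_linearEquiv_comp_eq_of_surjective (LinearMap.surjective hg₀) (LinearMap.surjective hg)
    obtain ⟨e, he⟩ := LinearMap.surjective hg₀ 1
    left
    have : (⊤ : Submodule ℝ E).prod (ker g₀) = ker (g₀ ∘ₗ snd ℝ E E) := by ext; simp
    rw [this]
    refine glT0Rel_ker_of_comp_skewProd_eq A (f.smulRight e) (LinearMap.ext fun ⟨x, y⟩ => ?_)
    simpa [hφ_apply, he, add_comm] using DFunLike.congr_fun hA y

theorem finrank_top_prod_ker_inf_ker_nilT0 {g₀ : Dual ℝ E} (hg₀ : g₀ ≠ 0) :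
    finrank ℝ ↥((⊤ : Submodule ℝ E).prod (ker g₀) ⊓ ker (nilT0 n)) + 1 = n := by
  rw [ker_nilT0, Submodule.prod_inf_prod, top_inf_eq, inf_top_eq, Submodule.finrank_bot_prod,
    Dual.finrank_ker_add_one_of_ne_zero hg₀, finrank_fin_fun]

theorem finrank_prod_top_inf_ker_nilT0 (p : Submodule ℝ E) :
    finrank ℝ ↥(p.prod ⊤ ⊓ ker (nilT0 n)) = n := by
  rw [ker_nilT0, Submodule.prod_inf_prod, inf_top_eq, inf_bot_eq, Submodule.finrank_bot_prod,
    finrank_top, finrank_fin_fun]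

end GLT0

theorem stmt_8 (m' : ℕ)
    (U1 U2 : Submodule ℝ ((Fin (m'+1) → ℝ) × (Fin (m'+1) → ℝ)))
    (hU1 : U1 = Submodule.prod ⊤
      (LinearMap.ker (LinearMap.proj (Fin.last m') : (Fin (m'+1) → ℝ) →ₗ[ℝ] ℝ)))
    (hU2 : U2 = Submodule.prod
      (LinearMap.ker (LinearMap.proj (Fin.last m') : (Fin (m'+1) → ℝ) →ₗ[ℝ] ℝ)) ⊤) :
    (∀ U U' : Submodule ℝ ((Fin (m'+1) → ℝ) × (Fin (m'+1) → ℝ)),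
      Module.finrank ℝ ↥U = 2*m' + 1 → Module.finrank ℝ ↥U' = 2*m' + 1 →
      (glT0Rel (m'+1) U U' ↔
        Module.finrank ℝ ↥(U ⊓ LinearMap.ker (nilT0 (m'+1))) =
          Module.finrank ℝ ↥(U' ⊓ LinearMap.ker (nilT0 (m'+1))))) ∧
    (∀ U : Submodule ℝ ((Fin (m'+1) → ℝ) × (Fin (m'+1) → ℝ)),
      Module.finrank ℝ ↥U = 2*m' + 1 →
      (Module.finrank ℝ ↥(U ⊓ LinearMap.ker (nilT0 (m'+1))) = m' ∨
        Module.finrank ℝ ↥(U ⊓ LinearMap.ker (nilT0 (m'+1))) = m' + 1) ∧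
      (glT0Rel (m'+1) U U1 ∨ glT0Rel (m'+1) U U2)) ∧
    Module.finrank ℝ ↥(U1 ⊓ LinearMap.ker (nilT0 (m'+1))) = m' ∧
    Module.finrank ℝ ↥(U2 ⊓ LinearMap.ker (nilT0 (m'+1))) = m' + 1 ∧
    ¬ glT0Rel (m'+1) U1 U2 := by
  subst hU1 hU2
  set g₀ : Dual ℝ (Fin (m'+1) → ℝ) := LinearMap.proj (Fin.last m')
  have hg₀ : g₀ ≠ 0 := fun h => by
    simpa [g₀] using DFunLike.congr_fun h (Pi.single (Fin.last m') 1)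
  have hd₁ := finrank_top_prod_ker_inf_ker_nilT0 hg₀
  have hd₂ := finrank_prod_top_inf_ker_nilT0 (n := m' + 1) (ker g₀)
  have hclass (U : Submodule ℝ ((Fin (m'+1) → ℝ) × (Fin (m'+1) → ℝ)))
      (hU : finrank ℝ U = 2*m' + 1) :=
    glT0Rel_top_prod_or_prod_top hg₀ (U := U) (by omega)
  refine ⟨fun U U' hU hU' => ⟨glT0Rel.finrank_inf_ker_eq, fun hUU' => ?_⟩,
    fun U hU => ⟨?_, hclass U hU⟩, by omega, hd₂, fun h => ?_⟩
  · rcases hclass U hU with h | h <;> rcases hclass U' hU' with h' | h'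
    · exact h.trans h'.symm
    · have := h.finrank_inf_ker_eq; have := h'.finrank_inf_ker_eq; omega
    · have := h.finrank_inf_ker_eq; have := h'.finrank_inf_ker_eq; omega
    · exact h.trans h'.symm
  · rcases hclass U hU with h | h <;> have := h.finrank_inf_ker_eq <;> omega
  · have := h.finrank_inf_ker_eq
    omega
end

section
/- Every even-dimensional almost Abelian Lie algebra admits a paracomplex structure. More precisely: for every f ∈ End(R^{2m-1}), the almost Abelian Lie algebra g_f = R^{2m-1} ⋊_f R admits an endomorphism E with E^2 = id, whose ±1-eigenspaces both have dimension m, whose Nijenhuis tensor vanishes, and which leaves the codimension-one Abelian ideal R^{2m-1} invariant. -/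
/-- The Lie bracket of the almost Abelian Lie algebra `g_f = ℝ^k ⋊_f ℝ`. -/
def aaBr {k : ℕ} (f : Module.End ℝ (Fin k → ℝ)) :
    ((Fin k → ℝ) × ℝ) → ((Fin k → ℝ) × ℝ) → ((Fin k → ℝ) × ℝ) :=
  fun x y => (x.2 • f y.1 - y.2 • f x.1, 0)

/-!
Take an `f`-invariant subspace `W ⊆ ℝ^(2m+1)` of dimension `m` and a complement `W'`, and let
`A` be the involution that is `1` on `W` and `-1` on `W'`. Then `E = A × id` is an involution of
`g_f` with `±1`-eigenspaces `W ⊕ ℝ` and `W'`, both of dimension `m + 1`. Because `W` is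
`f`-invariant, `A f A = f A - A f + f`, and this identity is exactly the vanishing of the
Nijenhuis tensor of `E`.

Invariant subspaces of dimension `m` exist because a real endomorphism has an invariant plane
(coming from an eigenvector or an irreducible quadratic factor of its minimal polynomial), hence,
by restriction and duality, invariant subspaces of every even dimension and every even
codimension; one of `m` and `(2m+1) - m` is even.
-/

open Module Polynomial

theorem Submodule.exists_le_finrank_eq {K V : Type*} [DivisionRing K] [AddCommGroup V]
    [Module K V] (U : Submodule K V) {k : ℕ} (hk : k ≤ finrank K U) : ∃ S ≤ U, finrank K S = k := by
  obtain ⟨v, hv⟩ := exists_linearIndependent_of_le_finrank hk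
  refine ⟨(span K (Set.range v)).map U.subtype, map_subtype_le _ _, ?_⟩
  rw [finrank_map_subtype_eq, finrank_span_eq_card hv, Fintype.card_fin]

theorem Submodule.finrank_prod {K V W : Type*} [DivisionRing K] [AddCommGroup V] [Module K V]
    [AddCommGroup W] [Module K W] [FiniteDimensional K V] [FiniteDimensional K W]
    (p : Submodule K V) (q : Submodule K W) :
    finrank K (p.prod q) = finrank K p + finrank K q := by
  calc finrank K (p.prod q) = finrank K (LinearMap.range (p.subtype.prodMap q.subtype)) := by
        rw [LinearMap.range_prodMap, p.range_subtype, q.range_subtype]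
    _ = finrank K (p × q) := LinearMap.finrank_range_of_inj
        (Prod.map_injective.mpr ⟨p.injective_subtype, q.injective_subtype⟩)
    _ = finrank K p + finrank K q := Module.finrank_prod

namespace Module.End

section Field

variable {K V : Type*} [Field K] [AddCommGroup V] [Module K V]

theorem ker_aeval_ne_bot_of_dvd_minpoly [FiniteDimensional K V] {f : End K V} {p : K[X]}
    (hdvd : p ∣ minpoly K f) (hp : ¬IsUnit p) : LinearMap.ker (aeval f p) ≠ ⊥ := by
  obtain ⟨q, hq⟩ := hdvd
  intro hker
  have hq0 : q ≠ 0 := by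
    rintro rfl
    exact minpoly.ne_zero (Algebra.IsIntegral.isIntegral f) (by simpa using hq)
  have hfq : aeval f q = 0 := by
    ext x
    apply LinearMap.ker_eq_bot.mp hker
    rw [← mul_apply, ← map_mul, ← hq, minpoly.aeval]
    simp
  have : p * q ∣ 1 * q := by rw [one_mul, ← hq]; exact minpoly.dvd K f hfq
  exact hp (isUnit_of_dvd_one ((mul_dvd_mul_iff_right hq0).mp this))

theorem span_pair_mem_invtSubmodule_of_aeval_eq_zero {f : End K V} {p : K[X]}
    (hp : p.natDegree = 2) {v : V} (hv : aeval f p v = 0) :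
    Submodule.span K {v, f v} ∈ f.invtSubmodule := by
  have hp2 : p.coeff 2 ≠ 0 := by
    rw [← hp]
    exact leadingCoeff_ne_zero.mpr (by rintro rfl; simp at hp)
  rw [eq_quadratic_of_degree_le_two (natDegree_le_iff_degree_le.mp hp.le)] at hv
  have hffv : f (f v) = -(p.coeff 2)⁻¹ • (p.coeff 1 • f v + p.coeff 0 • v) := by
    simp only [map_add, map_mul, aeval_C, aeval_X, LinearMap.add_apply, mul_apply, pow_two,
      algebraMap_end_apply] at hv
    rw [← inv_smul_smul₀ hp2 (f (f v)), neg_smul, ← smul_neg]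
    congr 1
    linear_combination (norm := module) hv
  have hv_mem : v ∈ Submodule.span K {v, f v} := Submodule.subset_span (by simp)
  have hfv_mem : f v ∈ Submodule.span K {v, f v} := Submodule.subset_span (by simp)
  rw [mem_invtSubmodule, Submodule.span_le]
  rintro _ (rfl | rfl)
  · exact hfv_mem
  · rw [SetLike.mem_coe, Submodule.mem_comap, hffv]
    exact Submodule.smul_mem _ _ (Submodule.add_mem _ (Submodule.smul_mem _ _ hfv_mem)
      (Submodule.smul_mem _ _ hv_mem))

theorem eigenspace_one_of_ne {μ : K} (hμ : μ ≠ 1) : eigenspace (1 : End K V) μ = ⊥ := by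
  ext x
  rw [mem_eigenspace_iff, one_apply, Submodule.mem_bot]
  constructor
  · intro hx
    have : (1 - μ) • x = 0 := by rw [sub_smul, one_smul, ← hx, sub_self]
    exact (smul_eq_zero_iff_right (sub_ne_zero.mpr hμ.symm)).mp this
  · rintro rfl
    simp

end Field

section CommRing

variable {R M : Type*} [CommRing R] [AddCommGroup M] [Module R M]

theorem mem_invtSubmodule_of_le_eigenspace {f : End R M} {μ : R} {W : Submodule R M}
    (hW : W ≤ f.eigenspace μ) : W ∈ f.invtSubmodule := fun x hx => by
  simpa [mem_eigenspace_iff.mp (hW hx)] using W.smul_mem μ hx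

theorem range_mem_invtSubmodule_of_commute {f g : End R M} (h : Commute f g) :
    LinearMap.range g ∈ f.invtSubmodule := by
  rintro _ ⟨x, rfl⟩
  exact ⟨f x, by simpa using (LinearMap.congr_fun h.eq x).symm⟩

theorem dualCoannihilator_mem_invtSubmodule {f : End R M} {Φ : Submodule R (Dual R M)}
    (hΦ : Φ ∈ invtSubmodule f.dualMap) : Φ.dualCoannihilator ∈ f.invtSubmodule := by
  intro x hx
  simp only [Submodule.mem_comap, Submodule.mem_dualCoannihilator] at hx ⊢
  exact fun φ hφ => hx _ (hΦ hφ)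

theorem eigenspace_one_self : eigenspace (1 : End R M) 1 = ⊤ := by
  ext
  simp

theorem eigenspace_prodMap {N : Type*} [AddCommGroup N] [Module R N] (f : End R M)
    (g : End R N) (μ : R) :
    eigenspace (f.prodMap g) μ = (f.eigenspace μ).prod (g.eigenspace μ) := by
  ext
  simp [Prod.ext_iff]

end CommRing

section Real

variable {V : Type*} [AddCommGroup V] [Module ℝ V] [FiniteDimensional ℝ V]

theorem exists_hasEigenvalue_or_exists_mem_invtSubmodule_finrank_eq_two [Nontrivial V]
    (f : End ℝ V) : (∃ μ, f.HasEigenvalue μ) ∨ ∃ W ∈ f.invtSubmodule, finrank ℝ W = 2 := by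
  by_cases h : ∃ μ, f.HasEigenvalue μ
  · exact .inl h
  right
  simp only [not_exists] at h
  obtain ⟨p, hp, hpdvd⟩ := WfDvdMonoid.exists_irreducible_factor (minpoly.not_isUnit ℝ f)
    (minpoly.ne_zero (Algebra.IsIntegral.isIntegral f))
  have hdeg : p.natDegree = 2 := by
    have hp1 : p.natDegree ≠ 1 := fun hp1 => by
      obtain ⟨μ, hμ⟩ := exists_root_of_degree_eq_one
        ((degree_eq_iff_natDegree_eq_of_pos one_pos).mpr hp1)
      exact h μ (hasEigenvalue_iff_isRoot.mpr (hμ.dvd hpdvd))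
    have := hp.natDegree_le_two
    have := hp.natDegree_pos
    omega
  obtain ⟨v, hv, hv0⟩ := Submodule.exists_mem_ne_zero_of_ne_bot
    (ker_aeval_ne_bot_of_dvd_minpoly hpdvd hp.not_isUnit)
  refine ⟨_, span_pair_mem_invtSubmodule_of_aeval_eq_zero hdeg hv, ?_⟩
  have hind : LinearIndependent ℝ ![v, f v] := by
    rw [LinearIndependent.pair_iff' hv0]
    exact fun a ha => h a (hasEigenvalue_of_hasEigenvector ⟨mem_eigenspace_iff.mpr ha.symm, hv0⟩)
  rw [← Matrix.range_cons_cons_empty v (f v) ![], finrank_span_eq_card hind, Fintype.card_fin]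

theorem exists_mem_invtSubmodule_finrank_eq_two (f : End ℝ V) (hV : 2 ≤ finrank ℝ V) :
    ∃ W ∈ f.invtSubmodule, finrank ℝ W = 2 := by
  induction hn : finrank ℝ V using Nat.strong_induction_on generalizing V with
  | _ n ih =>
  have : Nontrivial V := Module.nontrivial_of_finrank_pos (R := ℝ) (by omega)
  obtain hW | ⟨μ, hμ⟩ := (exists_hasEigenvalue_or_exists_mem_invtSubmodule_finrank_eq_two f).symm
  · exact hW
  · by_cases hK : 2 ≤ finrank ℝ (f.eigenspace μ)
    · obtain ⟨S, hSK, hS⟩ := (f.eigenspace μ).exists_le_finrank_eq hK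
      exact ⟨S, mem_invtSubmodule_of_le_eigenspace hSK, hS⟩
    by_cases hn2 : n = 2
    · exact ⟨⊤, invtSubmodule.top_mem f, by rw [finrank_top, hn, hn2]⟩
    -- the eigenspace is a line, so the invariant subspace `range (f - μ)` is a hyperplane
    have hK1 : finrank ℝ (LinearMap.ker (f - μ • 1)) = 1 := by
      have := Submodule.one_le_finrank_iff.mpr (hasEigenvalue_iff.mp hμ)
      rw [eigenspace_def] at hK this
      omega
    have hR : finrank ℝ (LinearMap.range (f - μ • 1)) = n - 1 := by
      have := LinearMap.finrank_range_add_finrank_ker (f - μ • 1)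
      omega
    have hRf : LinearMap.range (f - μ • 1) ∈ f.invtSubmodule :=
      range_mem_invtSubmodule_of_commute
        ((Commute.refl f).sub_right ((Commute.one_right f).smul_right μ))
    obtain ⟨S, hS, hS2⟩ := ih (n - 1) (by omega) (f.restrict hRf) (by omega) hR
    exact ⟨S.map (LinearMap.range (f - μ • 1)).subtype,
      invtSubmodule.map_subtype_mem_of_mem_invtSubmodule f hRf hS,
      by rwa [Submodule.finrank_map_subtype_eq]⟩

theorem exists_mem_invtSubmodule_finrank_add_two_eq (f : End ℝ V) (hV : 2 ≤ finrank ℝ V) :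
    ∃ W ∈ f.invtSubmodule, finrank ℝ W + 2 = finrank ℝ V := by
  obtain ⟨Φ, hΦ, hΦ2⟩ := exists_mem_invtSubmodule_finrank_eq_two f.dualMap
    (by rwa [Subspace.dual_finrank_eq])
  refine ⟨Φ.dualCoannihilator, dualCoannihilator_mem_invtSubmodule hΦ, ?_⟩
  have := Subspace.finrank_add_finrank_dualCoannihilator_eq Φ
  omega

theorem exists_mem_invtSubmodule_finrank_add_two_mul_eq (f : End ℝ V) {d : ℕ}
    (hd : 2 * d ≤ finrank ℝ V) : ∃ W ∈ f.invtSubmodule, finrank ℝ W + 2 * d = finrank ℝ V := by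
  induction d with
  | zero => exact ⟨⊤, invtSubmodule.top_mem f, by simp⟩
  | succ d ih =>
    obtain ⟨U, hU, hUd⟩ := ih (by omega)
    obtain ⟨S, hS, hS2⟩ := exists_mem_invtSubmodule_finrank_add_two_eq (f.restrict hU) (by omega)
    refine ⟨S.map U.subtype, invtSubmodule.map_subtype_mem_of_mem_invtSubmodule f hU hS, ?_⟩
    rw [Submodule.finrank_map_subtype_eq]
    omega

theorem exists_mem_invtSubmodule_finrank_eq_of_finrank_eq_two_mul_add_one (f : End ℝ V)
    {m : ℕ} (hV : finrank ℝ V = 2 * m + 1) : ∃ W ∈ f.invtSubmodule, finrank ℝ W = m := by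
  obtain ⟨d, rfl | rfl⟩ := Nat.even_or_odd' m
  · obtain ⟨Φ, hΦ, hΦd⟩ := exists_mem_invtSubmodule_finrank_add_two_mul_eq f.dualMap
      (d := d) (by rw [Subspace.dual_finrank_eq]; omega)
    refine ⟨Φ.dualCoannihilator, dualCoannihilator_mem_invtSubmodule hΦ, ?_⟩
    have := Subspace.finrank_add_finrank_dualCoannihilator_eq Φ
    rw [Subspace.dual_finrank_eq] at hΦd
    omega
  · obtain ⟨W, hW, hWd⟩ := exists_mem_invtSubmodule_finrank_add_two_mul_eq f (d := d + 1)
      (by omega)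
    exact ⟨W, hW, by omega⟩

end Real

end Module.End

namespace Submodule

variable {K V : Type*} [Field K] [AddCommGroup V] [Module K V] {p q : Submodule K V}

noncomputable def involutionOfIsCompl (h : IsCompl p q) : End K V :=
  (2 : K) • p.projection q h - 1

theorem involutionOfIsCompl_apply (h : IsCompl p q) (x : V) :
    involutionOfIsCompl h x = (2 : K) • p.projection q h x - x :=
  rfl

theorem involutionOfIsCompl_mul_self (h : IsCompl p q) :
    involutionOfIsCompl h * involutionOfIsCompl h = 1 := by
  ext x
  have hPP := projection_apply_of_mem_left h (projection_apply_mem h x)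
  simp only [End.mul_apply, involutionOfIsCompl_apply, map_sub, map_smul, hPP, End.one_apply]
  module

theorem eigenspace_involutionOfIsCompl_one [NeZero (2 : K)] (h : IsCompl p q) :
    (involutionOfIsCompl h).eigenspace 1 = p := by
  ext x
  rw [End.mem_eigenspace_iff, involutionOfIsCompl_apply, one_smul, sub_eq_iff_eq_add,
    ← two_smul K, smul_right_inj two_ne_zero,
    ← LinearMap.IsIdempotentElem.mem_range_iff (isIdempotentElem_projection h), range_projection]

theorem eigenspace_involutionOfIsCompl_neg_one [NeZero (2 : K)] (h : IsCompl p q) :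
    (involutionOfIsCompl h).eigenspace (-1) = q := by
  ext x
  rw [End.mem_eigenspace_iff, involutionOfIsCompl_apply, neg_one_smul, sub_eq_neg_self,
    smul_eq_zero_iff_right two_ne_zero, projection_apply_eq_zero_iff]

theorem involutionOfIsCompl_conj_of_mem_invtSubmodule {f : End K V}
    (hp : p ∈ f.invtSubmodule) (h : IsCompl p q) :
    involutionOfIsCompl h * f * involutionOfIsCompl h
      = f * involutionOfIsCompl h - involutionOfIsCompl h * f + f := by
  ext x
  have hPfP : p.projection q h (f (p.projection q h x)) = f (p.projection q h x) :=
    projection_apply_of_mem_left h (hp (projection_apply_mem h x))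
  simp only [End.mul_apply, LinearMap.sub_apply, LinearMap.add_apply, involutionOfIsCompl_apply,
    map_sub, map_smul, hPfP]
  module

end Submodule

def nijenhuis {M : Type*} [AddCommGroup M] (br : M → M → M) (E : M → M) (x y : M) : M :=
  br (E x) (E y) - E (br (E x) y + br x (E y)) + br x y

theorem nijenhuis_aaBr_prodMap_one_eq_zero {k : ℕ} {f A : End ℝ (Fin k → ℝ)}
    (hA : A * f * A = f * A - A * f + f) (x y : (Fin k → ℝ) × ℝ) :
    nijenhuis (aaBr f) (A.prodMap 1) x y = 0 := by
  have hA' (u) : A (f (A u)) = f (A u) - A (f u) + f u := LinearMap.congr_fun hA u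
  ext1
  · simp only [nijenhuis, aaBr, LinearMap.prodMap_apply, Prod.fst_add, Prod.fst_sub,
      Prod.fst_zero, End.one_apply, map_add, map_sub, map_smul, hA']
    module
  · simp [nijenhuis, aaBr]

theorem stmt_9 (m : ℕ) (f : Module.End ℝ (Fin (2*m+1) → ℝ)) :
    ∃ E : Module.End ℝ ((Fin (2*m+1) → ℝ) × ℝ),
      E * E = 1 ∧
      Module.finrank ℝ ↥(Module.End.eigenspace E 1) = m + 1 ∧
      Module.finrank ℝ ↥(Module.End.eigenspace E (-1)) = m + 1 ∧
      (∀ x y, aaBr f (E x) (E y) - E (aaBr f (E x) y + aaBr f x (E y)) + aaBr f x y = 0) ∧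
      (∀ u : Fin (2*m+1) → ℝ, (E (u, 0)).2 = 0) := by
  obtain ⟨W, hWf, hW⟩ :=
    f.exists_mem_invtSubmodule_finrank_eq_of_finrank_eq_two_mul_add_one (finrank_fin_fun ℝ)
  obtain ⟨W', hc⟩ := W.exists_isCompl
  have hW' : finrank ℝ W' = m + 1 := by
    have := Submodule.finrank_add_eq_of_isCompl hc
    rw [finrank_fin_fun, hW] at this
    omega
  refine ⟨(Submodule.involutionOfIsCompl hc).prodMap 1, ?_, ?_, ?_,
    nijenhuis_aaBr_prodMap_one_eq_zero
      (Submodule.involutionOfIsCompl_conj_of_mem_invtSubmodule hWf hc), fun _ => rfl⟩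
  · rw [LinearMap.prodMap_mul, Submodule.involutionOfIsCompl_mul_self, one_mul,
      LinearMap.prodMap_one]
  · rw [End.eigenspace_prodMap, Submodule.eigenspace_involutionOfIsCompl_one,
      End.eigenspace_one_self, Submodule.finrank_prod, hW, finrank_top, finrank_self]
  · rw [End.eigenspace_prodMap, Submodule.eigenspace_involutionOfIsCompl_neg_one,
      End.eigenspace_one_of_ne (by norm_num), Submodule.finrank_prod, hW', finrank_bot, add_zero]
end

section
/- Let f ∈ End(R^{n-1}) have, with respect to some basis, the block form f = (A 0; B C) with A ∈ R^{p×p}, B ∈ R^{(n-p-1)×p}, C ∈ R^{(n-p-1)×(n-p-1)}. Then the almost Abelian Lie algebra g_f = R^{n-1} ⋊_f R admits a product structure of signature (p, n-p): an endomorphism E of g_f with E^2 = id, +1-eigenspace of dimension p, -1-eigenspace of dimension n-p, and vanishing Nijenhuis tensor, such that the ideal R^{n-1} is E-invariant. -/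
open Module Submodule

namespace Module.End

variable {K V ι : Type*} [Field K] [AddCommGroup V] [Module K V] [Fintype ι]

theorem repr_apply_of_apply_basis (B : Basis ι K V) {E : End K V} {ε : ι → K}
    (hE : ∀ i, E (B i) = ε i • B i) (x : V) (i : ι) :
    B.repr (E x) i = ε i * B.repr x i := by
  have hEx : E x = ∑ j, (ε j * B.repr x j) • B j := by
    conv_lhs => rw [← B.sum_repr x]
    simp only [map_sum, map_smul, hE, smul_smul, mul_comm]
  rw [hEx, B.repr_sum_self]

theorem eigenspace_eq_span_of_apply_basis (B : Basis ι K V) {E : End K V} {ε : ι → K}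
    (hE : ∀ i, E (B i) = ε i • B i) (μ : K) :
    eigenspace E μ = span K (B '' {i | ε i = μ}) := by
  ext x
  simp only [mem_eigenspace_iff, B.mem_span_image, Set.subset_def, Finset.mem_coe,
    Finsupp.mem_support_iff, Set.mem_ofPred_eq, ← B.repr.injective.eq_iff, Finsupp.ext_iff,
    repr_apply_of_apply_basis B hE, map_smul, Finsupp.smul_apply, smul_eq_mul]
  refine forall_congr' fun i => ?_
  by_cases hx : B.repr x i = 0 <;> simp [hx]

end Module.End

namespace Module.Basis

variable {K V ι : Type*} [Field K] [AddCommGroup V] [Module K V] (b : Basis ι K V) (s : Set ι)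

theorem span_image_mem_invtSubmodule (f : End K V)
    (hf : ∀ j ∈ s, ∀ i ∉ s, b.repr (f (b j)) i = 0) :
    span K (b '' s) ∈ f.invtSubmodule := by
  rw [End.mem_invtSubmodule, span_le]
  rintro - ⟨j, hj, rfl⟩
  exact b.mem_span_image.2 fun i hi =>
    by_contra fun his => Finsupp.mem_support_iff.1 hi (hf j hj i his)

open Classical in
noncomputable def involution : End K V :=
  b.constr K fun i => (if i ∈ s then 1 else -1 : K) • b i

variable {s}

theorem involution_apply_of_mem {i : ι} (hi : i ∈ s) : b.involution s (b i) = b i := by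
  simp [involution, hi]

theorem involution_apply_of_notMem {i : ι} (hi : i ∉ s) : b.involution s (b i) = -b i := by
  simp [involution, hi]

variable (s)

theorem involution_mul_self : b.involution s * b.involution s = 1 := by
  refine b.ext fun i => ?_
  by_cases hi : i ∈ s
  · simp [involution_apply_of_mem b hi]
  · simp [involution_apply_of_notMem b hi]

open Classical in
theorem involution_apply_self (i : ι) :
    b.involution s (b i) = (if i ∈ s then 1 else -1 : K) • b i :=
  b.constr_basis K _ i

theorem involution_prod_singleton :
    (b.prod (Basis.singleton Unit K)).involution (Sum.inl '' s) = (b.involution s).prodMap (-1) := by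
  refine (b.prod (Basis.singleton Unit K)).ext ?_
  rintro (i | ⟨⟩)
  · by_cases hi : i ∈ s
    · rw [involution_apply_of_mem _ (Set.mem_image_of_mem Sum.inl hi)]
      simp [involution_apply_of_mem b hi]
    · rw [involution_apply_of_notMem _ (by simpa using hi)]
      simp [involution_apply_of_notMem b hi]
  · rw [involution_apply_of_notMem _ (by simp)]
    simp

variable [Fintype ι]

theorem finrank_span_image : finrank K (span K (b '' s)) = s.ncard := by
  classical
  rw [Set.image_eq_range, ← Nat.card_coe_set_eq, Nat.card_eq_fintype_card]
  exact finrank_span_eq_card (b.linearIndependent.comp _ Subtype.val_injective)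

variable [NeZero (2 : K)]

theorem eigenspace_involution_one : End.eigenspace (b.involution s) 1 = span K (b '' s) := by
  classical
  rw [End.eigenspace_eq_span_of_apply_basis b (involution_apply_self b s)]
  have hK : (-1 : K) ≠ 1 := fun h => two_ne_zero (by linear_combination -h : (2 : K) = 0)
  congr! 2
  ext i
  by_cases hi : i ∈ s <;> simp [hi, hK]

theorem eigenspace_involution_neg_one :
    End.eigenspace (b.involution s) (-1) = span K (b '' sᶜ) := by
  classical
  rw [End.eigenspace_eq_span_of_apply_basis b (involution_apply_self b s)]
  have hK : (-1 : K) ≠ 1 := fun h => two_ne_zero (by linear_combination -h : (2 : K) = 0)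
  congr! 2
  ext i
  by_cases hi : i ∈ s <;> simp [hi, hK.symm]

theorem finrank_eigenspace_involution_one :
    finrank K (End.eigenspace (b.involution s) 1) = s.ncard := by
  rw [eigenspace_involution_one, finrank_span_image]

theorem finrank_eigenspace_involution_neg_one :
    finrank K (End.eigenspace (b.involution s) (-1)) = sᶜ.ncard := by
  rw [eigenspace_involution_neg_one, finrank_span_image]

end Module.Basis

namespace Module.End

variable {R M : Type*} [CommRing R] [AddCommGroup M] [Module R M]

theorem add_one_mul_mul_sub_one_eq_zero {S f : End R M} (hS : S * S = 1)
    (hf : eigenspace S (-1) ∈ f.invtSubmodule) :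
    (S + 1) * f * (S - 1) = 0 := by
  refine LinearMap.ext fun x => ?_
  have hw : (S - 1) x ∈ eigenspace S (-1) := by
    rw [mem_eigenspace_iff, ← mul_apply, mul_sub, hS, mul_one]
    simp
  have hfw := mem_eigenspace_iff.1 (hf hw)
  rw [mul_apply, mul_apply, LinearMap.add_apply, hfw, one_apply, neg_one_smul, neg_add_cancel,
    LinearMap.zero_apply]

end Module.End

theorem aaBr_nijenhuis_prodMap_neg_one {k : ℕ} {f S : End ℝ (Fin k → ℝ)}
    (hS : (S + 1) * f * (S - 1) = 0) (x y : (Fin k → ℝ) × ℝ) :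
    let E := S.prodMap (-1 : End ℝ ℝ)
    aaBr f (E x) (E y) - E (aaBr f (E x) y + aaBr f x (E y)) + aaBr f x y = 0 := by
  obtain ⟨u, a⟩ := x
  obtain ⟨v, c⟩ := y
  have hK (w) : S (f (S w)) - S (f w) + (f (S w) - f w) = 0 := by
    simpa using LinearMap.congr_fun hS w
  ext1
  · simp only [aaBr, LinearMap.prodMap_apply, LinearMap.neg_apply, End.one_apply, Prod.fst_add,
      Prod.fst_sub, Prod.fst_zero, map_add, map_sub, map_smul]
    linear_combination (norm := module) c • hK u - a • hK v
  · simp [aaBr]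

theorem stmt_10 (p' q' : ℕ) (f : Module.End ℝ (Fin (p'+q'+1) → ℝ))
    (hf : ∃ b : Module.Basis (Fin (p'+q'+1)) ℝ (Fin (p'+q'+1) → ℝ),
      ∀ i j : Fin (p'+q'+1), (i : ℕ) < p'+1 → p'+1 ≤ (j : ℕ) →
        b.repr (f (b j)) i = 0) :
    ∃ E : Module.End ℝ ((Fin (p'+q'+1) → ℝ) × ℝ),
      E * E = 1 ∧
      Module.finrank ℝ ↥(Module.End.eigenspace E 1) = p' + 1 ∧
      Module.finrank ℝ ↥(Module.End.eigenspace E (-1)) = q' + 1 ∧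
      (∀ x y, aaBr f (E x) (E y) - E (aaBr f (E x) y + aaBr f x (E y)) + aaBr f x y = 0) ∧
      (∀ u : Fin (p'+q'+1) → ℝ, (E (u, 0)).2 = 0) := by
  obtain ⟨b, hb⟩ := hf
  set s : Set (Fin (p'+q'+1)) := {i | (i : ℕ) < p' + 1}
  have hs : s.ncard = p' + 1 := by
    rw [Set.ncard_eq_toFinset_card', Set.toFinset_ofPred, Fin.card_filter_val_lt]
    omega
  have hinv : End.eigenspace (b.involution s) (-1) ∈ f.invtSubmodule := by
    rw [b.eigenspace_involution_neg_one]
    exact b.span_image_mem_invtSubmodule sᶜ f fun j hj i hi => hb i j (not_not.1 hi) (not_lt.1 hj)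
  set B := b.prod (Basis.singleton Unit ℝ)
  have hcard : (Sum.inl '' s : Set (Fin (p'+q'+1) ⊕ Unit)).ncard = p' + 1 := by
    rw [Set.ncard_image_of_injective _ Sum.inl_injective, hs]
  refine ⟨(b.involution s).prodMap (-1), ?_, ?_, ?_,
    aaBr_nijenhuis_prodMap_neg_one (End.add_one_mul_mul_sub_one_eq_zero
      (b.involution_mul_self s) hinv), fun u => by simp⟩
  all_goals rw [← b.involution_prod_singleton]
  · exact B.involution_mul_self _
  · rw [B.finrank_eigenspace_involution_one, hcard]
  · rw [B.finrank_eigenspace_involution_neg_one, Set.ncard_compl, hcard, Nat.card_sum,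
      Nat.card_eq_fintype_card, Nat.card_unique, Fintype.card_fin]
    omega
end

section
/- Let h be a Lie subalgebra of gl(n,R) and suppose K_h^{(1)} = S^2 U ⊗ span(v) for some nonzero subspace U ⊆ (R^{n-1})* and some v ∈ R^n \ R^{n-1}, and suppose every F ∈ h with F(R^{n-1}) ⊆ span(v) also satisfies F(v) ∈ R^{n-1}. Then the subspace h_1 = {F ∈ h : F(R^{n-1}) = 0} is zero, and there is a unique linear map ν : U → R^{n-1} such that for every α ∈ U, the unique F ∈ h with F|_{R^{n-1}} = α ⊗ v equals α ⊗ v − β ⊗ ν(α), where β ∈ (R^n)* annihilates R^{n-1} and β(v)=1. Moreover ν is either zero or injective. -/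
/-!
If `H ∈ h` restricts on `P` to `α ⊗ w` with `α ≠ 0` and `w ∈ P`, then `(u, u') ↦ α(u) α(u') w`
is a symmetric element of `K_h^{(1)}` (its partial maps are the restrictions of `α(u) H`), hence of
the form `B ⊗ v`; since `w ∈ P` and `v ∉ P`, this forces `w = 0`. For `α ∈ U` the same hypothesis
yields `F_α ∈ h` restricting to `α ⊗ v`. If `F ∈ h` vanishes on `P`, then `F v ∈ P` and `⁅F, F_α⁆`
restricts to `α ⊗ F v`, so `F v = 0`, and `F = 0` since `P` is a hyperplane. Hence `F_α` is unique
and linear in `α`, and `ν α := -F_α v`. Finally, if `ν α = 0` for some `α ≠ 0`, then `⁅F_α, F_γ⁆`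
restricts to `α ⊗ ν γ`, so `ν γ = 0` for every `γ`.
-/

attribute [local instance 100] LieRing.ofAssociativeRing

open LinearMap Submodule

theorem LinearMap.exists_comp_eq_of_range_le {R M N W : Type*} [Semiring R] [AddCommMonoid M]
    [AddCommMonoid N] [AddCommMonoid W] [Module R M] [Module R N] [Module R W]
    {T : M →ₗ[R] N} (hT : Function.Injective T) {S : W →ₗ[R] N} (hS : range S ≤ range T) :
    ∃ L : W →ₗ[R] M, T ∘ₗ L = S :=
  ⟨(LinearEquiv.ofInjective T hT).symm.toLinearMap ∘ₗ S.codRestrict _ fun x => hS ⟨x, rfl⟩,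
    by ext x; simp⟩

section

variable {K V : Type*} [Field K] [AddCommGroup V] [Module K V]

theorem Submodule.smul_eq_zero_of_smul_eq_smul_of_notMem {P : Submodule K V} {w v : V} {a b : K}
    (hw : w ∈ P) (hv : v ∉ P) (hab : a • w = b • v) : a • w = 0 := by
  obtain rfl | hb := eq_or_ne b 0
  · simpa using hab
  · refine absurd ?_ hv
    rw [← inv_smul_smul₀ hb v, ← hab]
    exact P.smul_mem _ (P.smul_mem _ hw)

section SqTensor

variable {M : Type*} [AddCommGroup M] [Module K M]

def sqTensor (α : M →ₗ[K] K) (x : V) : M →ₗ[K] M →ₗ[K] V :=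
  (α.smulRight α).compr₂ (toSpanSingleton K V x)

@[simp]
theorem sqTensor_apply (α : M →ₗ[K] K) (x : V) (u w : M) : sqTensor α x u w = (α u * α w) • x :=
  rfl

theorem sqTensor_comm (α : M →ₗ[K] K) (x : V) (u w : M) : sqTensor α x u w = sqTensor α x w u := by
  simp only [sqTensor_apply, mul_comm]

end SqTensor

/-- `K_h^{(1)} = S²U ⊗ span(v)`, for `P = ℝ^{n-1}` and `U ⊆ P*`. -/
def ProlongationEqSymSqTensor (h : LieSubalgebra K (Module.End K V)) (P : Submodule K V)
    (U : Submodule K (P →ₗ[K] K)) (v : V) : Prop :=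
  ∀ D : P →ₗ[K] P →ₗ[K] V, (∀ u w : P, D u w = D w u) →
    ((∀ u : P, ∃ F ∈ h, ∀ w : P, F w = D u w) ↔
      ∃ B : P →ₗ[K] P →ₗ[K] K, (∀ u w : P, B u w = B w u) ∧ (∀ u : P, B u ∈ U) ∧
        ∀ u w : P, D u w = B u w • v)

variable {h : LieSubalgebra K (Module.End K V)} {P : Submodule K V}
  {U : Submodule K (P →ₗ[K] K)} {v : V}

theorem lie_apply_of_restrict_eq_smul {F G : Module.End K V} {α γ : P →ₗ[K] K}
    (hF : ∀ u : P, F u = α u • v) (hG : ∀ u : P, G u = γ u • v) (u : P) :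
    ⁅F, G⁆ u = γ u • F v - α u • G v := by
  rw [Ring.lie_def, LinearMap.sub_apply, Module.End.mul_apply, Module.End.mul_apply, hF, hG,
    map_smul, map_smul]

namespace ProlongationEqSymSqTensor

variable (hK : ProlongationEqSymSqTensor h P U v)
include hK

theorem eq_zero_of_restrict_eq_smul_mem (hv : v ∉ P) {α : P →ₗ[K] K} (hα : α ≠ 0) {w₀ : V}
    (hw₀ : w₀ ∈ P) {H : Module.End K V} (hH : H ∈ h) (hHα : ∀ u : P, H u = α u • w₀) :
    w₀ = 0 := by
  obtain ⟨u₀, hu₀⟩ := DFunLike.ne_iff.mp hα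
  obtain ⟨B, -, -, hB⟩ := (hK (sqTensor α w₀) (sqTensor_comm α w₀)).mp fun u =>
    ⟨α u • H, h.smul_mem _ hH, fun w => by simp [hHα, smul_smul]⟩
  have := smul_eq_zero_of_smul_eq_smul_of_notMem hw₀ hv ((sqTensor_apply ..).symm.trans (hB u₀ u₀))
  exact (smul_eq_zero.mp this).resolve_left (mul_self_ne_zero.mpr hu₀)

theorem exists_restrict_eq_smul {α : P →ₗ[K] K} (hα : α ∈ U) :
    ∃ F ∈ h, ∀ u : P, F u = α u • v := by
  obtain rfl | hα₀ := eq_or_ne α 0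
  · exact ⟨0, h.zero_mem, fun u => by simp⟩
  obtain ⟨u₀, hu₀⟩ := DFunLike.ne_iff.mp hα₀
  obtain ⟨F, hF, hFα⟩ := (hK (sqTensor α v) (sqTensor_comm α v)).mpr
    ⟨α.smulRight α, fun u w => mul_comm _ _, fun u => U.smul_mem _ hα, fun _ _ => rfl⟩ u₀
  refine ⟨(α u₀)⁻¹ • F, h.smul_mem _ hF, fun u => ?_⟩
  rw [LinearMap.smul_apply, hFα, sqTensor_apply, smul_smul, inv_mul_cancel_left₀ hu₀]

theorem eq_zero_of_restrict_eq_zero (hv : v ∉ P) (hP : IsCoatom P) (hU : U ≠ ⊥)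
    (hhv : ∀ F ∈ h, (∀ u : P, ∃ c : K, F u = c • v) → F v ∈ P) :
    ∀ F ∈ h, (∀ u : P, F u = 0) → F = 0 := by
  intro F hF hF0
  obtain ⟨α, hαU, hα⟩ := exists_mem_ne_zero_of_ne_bot hU
  obtain ⟨G, hG, hGα⟩ := hK.exists_restrict_eq_smul hαU
  have hFv : F v = 0 := by
    refine hK.eq_zero_of_restrict_eq_smul_mem hv hα (hhv F hF fun u => ⟨0, by simp [hF0]⟩)
      (h.lie_mem hF hG) fun u => ?_
    simpa using lie_apply_of_restrict_eq_smul (α := 0) (fun u => by simp [hF0]) hGα u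
  rw [← ker_eq_top, eq_top_iff, ← (isCompl_span_singleton_of_isCoatom_of_notMem hP hv).sup_eq_top]
  exact sup_le (fun u hu => hF0 ⟨u, hu⟩) ((span_singleton_le_iff_mem _ _).mpr hFv)

theorem exists_linearMap_apply_eq_neg (hinj : ∀ F ∈ h, (∀ u : P, F u = 0) → F = 0) :
    ∃ ν : U →ₗ[K] V, ∀ α : U, ∀ F ∈ h, (∀ u : P, F u = (α : P →ₗ[K] K) u • v) → F v = -ν α := by
  set T : h →ₗ[K] P →ₗ[K] V := domRestrict' P ∘ₗ (h.incl : h →ₗ[K] Module.End K V)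
  have hT : Function.Injective T := by
    refine (injective_iff_map_eq_zero T).mpr fun F hF => Subtype.ext (hinj F F.2 fun u => ?_)
    exact congr($hF u)
  set S : U →ₗ[K] P →ₗ[K] V := llcomp K P K V (toSpanSingleton K V v) ∘ₗ U.subtype
  obtain ⟨L, hL⟩ := exists_comp_eq_of_range_le hT (S := S) <| by
    rintro _ ⟨α, rfl⟩
    obtain ⟨F, hF, hFα⟩ := hK.exists_restrict_eq_smul α.2
    exact ⟨⟨F, hF⟩, LinearMap.ext hFα⟩
  refine ⟨-(applyₗ v ∘ₗ (h.incl : h →ₗ[K] Module.End K V) ∘ₗ L), fun α F hF hFα => ?_⟩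
  have : (⟨F, hF⟩ : h) = L α := hT (LinearMap.ext fun u => (hFα u).trans congr($hL α u).symm)
  simp [← this]

theorem eq_zero_or_injective (hv : v ∉ P) {ν : U →ₗ[K] V}
    (hν : ∀ α : U, ∀ F ∈ h, (∀ u : P, F u = (α : P →ₗ[K] K) u • v) → F v = -ν α)
    (hνP : ∀ α, ν α ∈ P) : ν = 0 ∨ Function.Injective ν := by
  refine or_iff_not_imp_right.mpr fun hν_inj => LinearMap.ext fun γ => ?_
  obtain ⟨α, hνα, hα⟩ : ∃ α, ν α = 0 ∧ α ≠ 0 := by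
    simpa [injective_iff_map_eq_zero] using hν_inj
  obtain ⟨F, hF, hFα⟩ := hK.exists_restrict_eq_smul α.2
  obtain ⟨G, hG, hGγ⟩ := hK.exists_restrict_eq_smul γ.2
  refine hK.eq_zero_of_restrict_eq_smul_mem hv (α := α) (by simpa using hα) (hνP γ)
    (h.lie_mem hF hG) fun u => ?_
  rw [lie_apply_of_restrict_eq_smul hFα hGγ, hν α F hF hFα, hν γ G hG hGγ, hνα]
  simp

end ProlongationEqSymSqTensor

end

theorem stmt_11 {n : ℕ}
    (h : LieSubalgebra ℝ (Module.End ℝ (Fin (n+1) → ℝ)))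
    (P : Submodule ℝ (Fin (n+1) → ℝ))
    (hP : P = LinearMap.ker (LinearMap.proj (Fin.last n) : (Fin (n+1) → ℝ) →ₗ[ℝ] ℝ))
    (v : Fin (n+1) → ℝ) (hv : v ∉ P)
    (U : Submodule ℝ (P →ₗ[ℝ] ℝ)) (hU : U ≠ ⊥)
    (hK1 : ∀ D : P →ₗ[ℝ] P →ₗ[ℝ] (Fin (n+1) → ℝ), (∀ u w : P, D u w = D w u) →
      ((∀ u : P, ∃ F ∈ h, ∀ w : P, F (w : Fin (n+1) → ℝ) = D u w) ↔
        ∃ B : P →ₗ[ℝ] P →ₗ[ℝ] ℝ, (∀ u w : P, B u w = B w u) ∧ (∀ u : P, B u ∈ U) ∧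
          ∀ u w : P, D u w = B u w • v))
    (hhv : ∀ F ∈ h, (∀ u : P, ∃ c : ℝ, F (u : Fin (n+1) → ℝ) = c • v) → F v ∈ P) :
    (∀ F ∈ h, (∀ u : P, F (u : Fin (n+1) → ℝ) = 0) → F = 0) ∧
    ∃ ν : U →ₗ[ℝ] (Fin (n+1) → ℝ),
      (∀ α : U, ν α ∈ P ∧
        ∀ F ∈ h, (∀ u : P, F (u : Fin (n+1) → ℝ) = (α : P →ₗ[ℝ] ℝ) u • v) →
          F v = - ν α) ∧
      (∀ ν' : U →ₗ[ℝ] (Fin (n+1) → ℝ),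
        (∀ α : U, ν' α ∈ P ∧
          ∀ F ∈ h, (∀ u : P, F (u : Fin (n+1) → ℝ) = (α : P →ₗ[ℝ] ℝ) u • v) →
            F v = - ν' α) → ν' = ν) ∧
      (ν = 0 ∨ Function.Injective ν) := by
  have hK : ProlongationEqSymSqTensor h P U v := hK1
  have hPcoatom : IsCoatom P := hP ▸ isCoatom_ker_of_surjective (Function.surjective_eval _)
  have hinj := hK.eq_zero_of_restrict_eq_zero hv hPcoatom hU hhv
  obtain ⟨ν, hν⟩ := hK.exists_linearMap_apply_eq_neg hinj
  have hνP : ∀ α : U, ν α ∈ P := fun α => by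
    obtain ⟨F, hF, hFα⟩ := hK.exists_restrict_eq_smul α.2
    simpa [hν α F hF hFα] using hhv F hF fun u => ⟨_, hFα u⟩
  refine ⟨hinj, ν, fun α => ⟨hνP α, hν α⟩, fun ν' hν' => LinearMap.ext fun α => ?_,
    hK.eq_zero_or_injective hv hν hνP⟩
  obtain ⟨F, hF, hFα⟩ := hK.exists_restrict_eq_smul α.2
  exact neg_inj.mp (((hν' α).2 F hF hFα).symm.trans (hν α F hF hFα))
end

section
/- Let ω be a nondegenerate skew-symmetric bilinear form on R^{2m} and L ⊆ R^{2m} a Lagrangian subspace (L = L^{⊥ω}, dim L = m). Define h ⊆ gl(2m+1,R) as the set of block matrices (F α^{♯ω}; α 0) where α ranges over the annihilator-forms {ω(u,·) : u ∈ L}, α^{♯ω} is the ω-dual vector, and F ranges over the ω-symmetric endomorphisms of R^{2m} with image contained in L and L contained in the kernel. Then h is closed under the commutator bracket; in fact the bracket of any two such elements is of the form (β⊗α^{♯ω} − α⊗β^{♯ω}, 0; 0, 0) and lies in h. -/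
/-!
Write an element of `h` as the block endomorphism `(x, t) ↦ (F x + t • u, ω u x)` of `V × R`.
In a product of two of them every term but one dies: `F₁` kills `im F₂ ⊆ L` and `u₂ ∈ L`,
while `ω u₁ (F₂ x + t • u₂) = ω (F₂ u₁) x + t • ω u₁ u₂ = 0` because `F₂` kills `L` and `L` is
isotropic. What survives is the rank-one map `x ↦ ω u₂ x • u₁` in the corner, so the commutator
is the block with corner `x ↦ ω u₂ x • u₁ - ω u₁ x • u₂`, which is again ω-symmetric with image
in `L` and kernel containing `L`.
-/

section

variable {R V : Type*} [CommRing R] [AddCommGroup V] [Module R V]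
  (ω : V →ₗ[R] V →ₗ[R] R)

def blockEnd (F : Module.End R V) (u : V) : Module.End R (V × R) :=
  (F.coprod (LinearMap.toSpanSingleton R V u)).prod ((ω u).comp (LinearMap.fst R V R))

@[simp]
lemma blockEnd_apply (F : Module.End R V) (u x : V) (t : R) :
    blockEnd ω F u (x, t) = (F x + t • u, ω u x) :=
  rfl

def wedgeEnd (u v : V) : Module.End R V :=
  (ω v).smulRight u - (ω u).smulRight v

@[simp]
lemma wedgeEnd_apply (u v x : V) : wedgeEnd ω u v x = ω v x • u - ω u x • v :=
  rfl

variable {ω} {L : Submodule R V}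

lemma wedgeEnd_isSelfAdjoint (hskew : ∀ x y, ω x y = -ω y x) (u v : V) :
    ω.IsSelfAdjoint (wedgeEnd ω u v) := by
  intro x y
  simp only [wedgeEnd_apply, map_sub, map_smul, LinearMap.sub_apply, LinearMap.smul_apply,
    smul_eq_mul]
  rw [hskew u y, hskew v y, hskew x u, hskew x v]
  ring

lemma wedgeEnd_apply_mem {u v : V} (hu : u ∈ L) (hv : v ∈ L) (x : V) :
    wedgeEnd ω u v x ∈ L :=
  L.sub_mem (L.smul_mem _ hu) (L.smul_mem _ hv)

lemma wedgeEnd_apply_eq_zero (hiso : ∀ x ∈ L, ∀ y ∈ L, ω x y = 0) {u v x : V}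
    (hu : u ∈ L) (hv : v ∈ L) (hx : x ∈ L) : wedgeEnd ω u v x = 0 := by
  rw [wedgeEnd_apply, hiso _ hv _ hx, hiso _ hu _ hx, zero_smul, zero_smul, sub_zero]

lemma blockEnd_mul_blockEnd_apply (hiso : ∀ x ∈ L, ∀ y ∈ L, ω x y = 0)
    {F₁ F₂ : Module.End R V} {u₁ u₂ : V} (hu₁ : u₁ ∈ L) (hu₂ : u₂ ∈ L)
    (hF₁ker : ∀ x ∈ L, F₁ x = 0) (hF₂sym : ω.IsSelfAdjoint F₂) (hF₂im : ∀ x, F₂ x ∈ L)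
    (hF₂ker : ∀ x ∈ L, F₂ x = 0) (x : V) (t : R) :
    (blockEnd ω F₁ u₁ * blockEnd ω F₂ u₂) (x, t) = (ω u₂ x • u₁, 0) := by
  have hF₁ : F₁ (F₂ x + t • u₂) = 0 := by
    rw [map_add, map_smul, hF₁ker _ (hF₂im x), hF₁ker _ hu₂, smul_zero, add_zero]
  have hω : ω u₁ (F₂ x + t • u₂) = 0 := by
    rw [map_add, map_smul, ← hF₂sym, hF₂ker _ hu₁, hiso _ hu₁ _ hu₂, map_zero,
      LinearMap.zero_apply, smul_zero, add_zero]
  rw [Module.End.mul_apply, blockEnd_apply, blockEnd_apply, hF₁, hω, zero_add]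

lemma blockEnd_commutator (hiso : ∀ x ∈ L, ∀ y ∈ L, ω x y = 0)
    {F₁ F₂ : Module.End R V} {u₁ u₂ : V} (hu₁ : u₁ ∈ L) (hu₂ : u₂ ∈ L)
    (hF₁sym : ω.IsSelfAdjoint F₁) (hF₁im : ∀ x, F₁ x ∈ L) (hF₁ker : ∀ x ∈ L, F₁ x = 0)
    (hF₂sym : ω.IsSelfAdjoint F₂) (hF₂im : ∀ x, F₂ x ∈ L) (hF₂ker : ∀ x ∈ L, F₂ x = 0) :
    blockEnd ω F₁ u₁ * blockEnd ω F₂ u₂ - blockEnd ω F₂ u₂ * blockEnd ω F₁ u₁ =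
      blockEnd ω (wedgeEnd ω u₁ u₂) 0 := by
  refine LinearMap.ext fun ⟨x, t⟩ => ?_
  rw [LinearMap.sub_apply,
    blockEnd_mul_blockEnd_apply hiso hu₁ hu₂ hF₁ker hF₂sym hF₂im hF₂ker,
    blockEnd_mul_blockEnd_apply hiso hu₂ hu₁ hF₂ker hF₁sym hF₁im hF₁ker]
  simp

end

theorem stmt_12_general (m : ℕ)
    (ω : (Fin (2*m) → ℝ) →ₗ[ℝ] (Fin (2*m) → ℝ) →ₗ[ℝ] ℝ)
    (hskew : ∀ x y, ω x y = - ω y x)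
    (L : Submodule ℝ (Fin (2*m) → ℝ))
    (hiso : ∀ x ∈ L, ∀ y ∈ L, ω x y = 0)
    (H1 H2 : Module.End ℝ ((Fin (2*m) → ℝ) × ℝ))
    (F1 F2 : Module.End ℝ (Fin (2*m) → ℝ)) (u1 u2 : Fin (2*m) → ℝ)
    (hu1 : u1 ∈ L) (hu2 : u2 ∈ L)
    (hF1sym : ∀ x y, ω (F1 x) y = ω x (F1 y))
    (hF1im : ∀ x, F1 x ∈ L) (hF1ker : ∀ x ∈ L, F1 x = 0)
    (hF2sym : ∀ x y, ω (F2 x) y = ω x (F2 y))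
    (hF2im : ∀ x, F2 x ∈ L) (hF2ker : ∀ x ∈ L, F2 x = 0)
    (hH1 : ∀ x t, H1 (x, t) = (F1 x + t • u1, ω u1 x))
    (hH2 : ∀ x t, H2 (x, t) = (F2 x + t • u2, ω u2 x)) :
    (∀ (x : Fin (2*m) → ℝ) (t : ℝ),
      (H1 * H2 - H2 * H1) (x, t) = ((ω u2 x) • u1 - (ω u1 x) • u2, 0)) ∧
    ∃ (F : Module.End ℝ (Fin (2*m) → ℝ)) (u : Fin (2*m) → ℝ),
      u ∈ L ∧ (∀ x y, ω (F x) y = ω x (F y)) ∧ (∀ x, F x ∈ L) ∧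
      (∀ x ∈ L, F x = 0) ∧
      ∀ (x : Fin (2*m) → ℝ) (t : ℝ),
        (H1 * H2 - H2 * H1) (x, t) = (F x + t • u, ω u x) := by
  obtain rfl : H1 = blockEnd ω F1 u1 := LinearMap.ext fun ⟨x, t⟩ => hH1 x t
  obtain rfl : H2 = blockEnd ω F2 u2 := LinearMap.ext fun ⟨x, t⟩ => hH2 x t
  have hbracket := blockEnd_commutator hiso hu1 hu2 hF1sym hF1im hF1ker hF2sym hF2im hF2ker
  refine ⟨fun x t => by simp [hbracket], wedgeEnd ω u1 u2, 0, L.zero_mem,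
    wedgeEnd_isSelfAdjoint hskew u1 u2, wedgeEnd_apply_mem hu1 hu2,
    fun x hx => wedgeEnd_apply_eq_zero hiso hu1 hu2 hx, fun x t => by rw [hbracket, blockEnd_apply]⟩

theorem stmt_12 (m : ℕ)
    (ω : (Fin (2*m) → ℝ) →ₗ[ℝ] (Fin (2*m) → ℝ) →ₗ[ℝ] ℝ)
    (hskew : ∀ x y, ω x y = - ω y x)
    (hnd : ∀ x, (∀ y, ω x y = 0) → x = 0)
    (L : Submodule ℝ (Fin (2*m) → ℝ))
    (hiso : ∀ x ∈ L, ∀ y ∈ L, ω x y = 0)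
    (hdim : Module.finrank ℝ ↥L = m)
    (H1 H2 : Module.End ℝ ((Fin (2*m) → ℝ) × ℝ))
    (F1 F2 : Module.End ℝ (Fin (2*m) → ℝ)) (u1 u2 : Fin (2*m) → ℝ)
    (hu1 : u1 ∈ L) (hu2 : u2 ∈ L)
    (hF1sym : ∀ x y, ω (F1 x) y = ω x (F1 y))
    (hF1im : ∀ x, F1 x ∈ L) (hF1ker : ∀ x ∈ L, F1 x = 0)
    (hF2sym : ∀ x y, ω (F2 x) y = ω x (F2 y))
    (hF2im : ∀ x, F2 x ∈ L) (hF2ker : ∀ x ∈ L, F2 x = 0)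
    (hH1 : ∀ x t, H1 (x, t) = (F1 x + t • u1, ω u1 x))
    (hH2 : ∀ x t, H2 (x, t) = (F2 x + t • u2, ω u2 x)) :
    (∀ (x : Fin (2*m) → ℝ) (t : ℝ),
      (H1 * H2 - H2 * H1) (x, t) = ((ω u2 x) • u1 - (ω u1 x) • u2, 0)) ∧
    ∃ (F : Module.End ℝ (Fin (2*m) → ℝ)) (u : Fin (2*m) → ℝ),
      u ∈ L ∧ (∀ x y, ω (F x) y = ω x (F y)) ∧ (∀ x, F x ∈ L) ∧
      (∀ x ∈ L, F x = 0) ∧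
      ∀ (x : Fin (2*m) → ℝ) (t : ℝ),
        (H1 * H2 - H2 * H1) (x, t) = (F x + t • u, ω u x) :=
  stmt_12_general m ω hskew L hiso H1 H2 F1 F2 u1 u2 hu1 hu2 hF1sym hF1im hF1ker hF2sym hF2im hF2ker
    hH1 hH2
end

section
/- Let h be a Lie subalgebra of gl(n,R). For every element f of the characteristic subalgebra k̃_h = {F|_{R^{n-1}} : F ∈ h, F(R^{n-1}) ⊆ R^{n-1}}, the almost Abelian Lie algebra g_f = R^{n-1} ⋊_f R admits a bilinear map (connection) ∇ : g_f × g_f → g_f which is (i) torsion-free: ∇_x y − ∇_y x = [x,y] for all x,y; (ii) flat: ∇_x ∇_y z − ∇_y ∇_x z = ∇_{[x,y]} z for all x,y,z; and (iii) compatible with h: ∇_x ∈ h ⊆ End(R^n) for all x, under the identification g_f ≅ R^n determined by the standard special basis. -/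
/-!
Let `φ` be the last coordinate, so that `g_f = ker φ ⊕ R e` with `φ e = 1`. The connection
`∇_x = φ x • F` does the job: it takes values in the line through `F`, so it lies in `h`; its
torsion vanishes because the `φ x φ y • F e` terms in the bracket cancel; its curvature operator
`∇_x ∇_y - ∇_y ∇_x` vanishes since all `∇_x` are multiples of one endomorphism; and
`∇_{[x,y]} = 0` because `[x,y] ∈ F (ker φ) ⊆ ker φ`.
-/

attribute [local instance 100] LieRing.ofAssociativeRing

namespace LinearMap

variable {R V : Type*} [CommRing R] [AddCommGroup V] [Module R V]
  (φ : V →ₗ[R] R) (F : Module.End R V) (e : V)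

/-- The bracket of the almost abelian Lie algebra `ker φ ⋊_F R e`. -/
def almostAbelianBracket (x y : V) : V :=
  φ x • F (y - φ y • e) - φ y • F (x - φ x • e)

theorem almostAbelianBracket_eq (x y : V) :
    almostAbelianBracket φ F e x y = φ x • F y - φ y • F x := by
  simp only [almostAbelianBracket, map_sub, map_smul, smul_sub, smul_smul, mul_comm]
  abel

theorem sub_smul_mem_ker {e : V} (he : φ e = 1) (v : V) : v - φ v • e ∈ ker φ := by
  simp [he]

theorem almostAbelianBracket_mem_ker {e : V} (he : φ e = 1) (hF : ∀ v ∈ ker φ, F v ∈ ker φ)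
    (x y : V) : almostAbelianBracket φ F e x y ∈ ker φ :=
  sub_mem (Submodule.smul_mem _ _ (hF _ (sub_smul_mem_ker φ he y)))
    (Submodule.smul_mem _ _ (hF _ (sub_smul_mem_ker φ he x)))

theorem smulRight_sub_smulRight_eq_almostAbelianBracket (x y : V) :
    φ.smulRight F x y - φ.smulRight F y x = almostAbelianBracket φ F e x y := by
  rw [almostAbelianBracket_eq, smulRight_apply, smulRight_apply, smul_apply, smul_apply]

theorem smulRight_apply_comm (x y z : V) :
    φ.smulRight F x (φ.smulRight F y z) = φ.smulRight F y (φ.smulRight F x z) := by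
  simp only [smulRight_apply, smul_apply, map_smul, smul_smul, mul_comm]

theorem smulRight_flat {e : V} (he : φ e = 1) (hF : ∀ v ∈ ker φ, F v ∈ ker φ) (x y z : V) :
    φ.smulRight F x (φ.smulRight F y z) - φ.smulRight F y (φ.smulRight F x z) =
      φ.smulRight F (almostAbelianBracket φ F e x y) z := by
  have hker := mem_ker.mp (almostAbelianBracket_mem_ker φ F he hF x y)
  rw [smulRight_apply_comm, sub_self, smulRight_apply, hker, zero_smul, zero_apply]

end LinearMap

open LinearMap in
theorem stmt_14 {n : ℕ}
    (h : LieSubalgebra ℝ (Module.End ℝ (Fin (n+1) → ℝ)))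
    (P : Submodule ℝ (Fin (n+1) → ℝ))
    (hP : P = LinearMap.ker (LinearMap.proj (Fin.last n) : (Fin (n+1) → ℝ) →ₗ[ℝ] ℝ))
    (F : Module.End ℝ (Fin (n+1) → ℝ)) (hF : F ∈ h)
    (hFP : ∀ u ∈ P, F u ∈ P)
    (e : Fin (n+1) → ℝ) (he : e = Pi.single (Fin.last n) 1)
    (br : (Fin (n+1) → ℝ) → (Fin (n+1) → ℝ) → (Fin (n+1) → ℝ))
    (hbr : ∀ x y, br x y = x (Fin.last n) • F (y - y (Fin.last n) • e)
                        - y (Fin.last n) • F (x - x (Fin.last n) • e)) :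
    ∃ D : (Fin (n+1) → ℝ) →ₗ[ℝ] Module.End ℝ (Fin (n+1) → ℝ),
      (∀ x, D x ∈ h) ∧
      (∀ x y, D x y - D y x = br x y) ∧
      (∀ x y z, D x (D y z) - D y (D x z) = D (br x y) z) := by
  set φ : (Fin (n+1) → ℝ) →ₗ[ℝ] ℝ := proj (Fin.last n)
  have hbr' : br = almostAbelianBracket φ F e := funext₂ hbr
  have hφe : φ e = 1 := by simp [φ, he]
  subst hP hbr'
  exact ⟨φ.smulRight F, fun x => h.smul_mem _ hF,
    smulRight_sub_smulRight_eq_almostAbelianBracket φ F e,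
    smulRight_flat φ F hφe hFP⟩
end

section
/- Let h ⊆ gl(n,R) be a Lie subalgebra with K_h^{(1)} = {0} and h_1 = {F ∈ h : F(R^{n-1}) = 0} satisfying h_1 = h_1^{R^{n-1}} := {F ∈ h_1 : F(R^n) ⊆ R^{n-1}}. Define W_h = {F(e_n) : F ∈ h_1} ⊆ R^{n-1}, k̃_h = {F|_{R^{n-1}} : F ∈ h, F(R^{n-1}) ⊆ R^{n-1}}, and F_h = T_1(ker T_2) where for ∇ ∈ D_h := {∇ ∈ (R^n)*⊗h : ∇ symmetric on R^{n-1}×R^{n-1}}, T(∇) = (∇_{e_n} − ∇_{(·)}e_n)|_{R^{n-1}} is split into its End(R^{n-1})-part T_1 and its span(e_n)-part T_2. Then F_h = k̃_h + (R^{n-1})* ⊗ W_h. -/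
/-!
A map `∇ : V → h` symmetric on the hyperplane `P` restricts to an element of `K_h^{(1)} = 0`,
so `∇_u` vanishes on `P` for `u ∈ P`, i.e. `∇_u ∈ h₁`. Hence `T(∇) = ∇_e|_P - (u ↦ ∇_u e)` splits
as an element of `k̃_h` (namely `∇_e`, which preserves `P` because `T₂(∇) = 0` and `∇_u e ∈ W_h ⊆ P`)
plus a map into `W_h`. Conversely, given `F ∈ h` preserving `P` and `G₂ : P → W_h`, lift `G₂`
linearly to `C : P → h₁` with `C u e = G₂ u` and put `∇_x = f(x) F - C(x - f(x) e)`, where `f` is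
the coordinate along `e`; then `∇_e = F` and `∇_u = -C u` for `u ∈ P`.
-/

open LinearMap

theorem LinearMap.exists_comp_eq_of_range_le_s16 {R M N Q : Type*} [Ring R]
    [AddCommGroup M] [Module R M] [AddCommGroup N] [Module R N] [AddCommGroup Q] [Module R Q]
    [Module.Projective R Q] (φ : M →ₗ[R] N) (g : Q →ₗ[R] N) (hg : range g ≤ range φ) :
    ∃ C : Q →ₗ[R] M, φ ∘ₗ C = g := by
  obtain ⟨C, hC⟩ := Module.projective_lifting_property φ.rangeRestrict
    (g.codRestrict (range φ) fun q => hg ⟨q, rfl⟩) φ.surjective_rangeRestrict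
  exact ⟨C, LinearMap.ext fun q => congrArg Subtype.val (LinearMap.congr_fun hC q)⟩

variable {K V : Type*} [Field K] [AddCommGroup V] [Module K V]

/-- The subspace `h₁` of the paper. -/
def vanishingOn (H : Submodule K (Module.End K V)) (P : Submodule K V) :
    Submodule K (Module.End K V) where
  carrier := {F | F ∈ H ∧ ∀ u : P, F u = 0}
  add_mem' ha hb := ⟨H.add_mem ha.1 hb.1, fun u => by simp [ha.2 u, hb.2 u]⟩
  zero_mem' := ⟨H.zero_mem, fun _ => rfl⟩
  smul_mem' c _ ha := ⟨H.smul_mem c ha.1, fun u => by simp [ha.2 u]⟩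

section

variable {H : Submodule K (Module.End K V)} {P : Submodule K V}

theorem apply_mem_vanishingOn_of_symm
    (hK1 : ∀ D : P →ₗ[K] P →ₗ[K] V, (∀ u w, D u w = D w u) →
      (∀ u, ∃ F ∈ H, ∀ w : P, F w = D u w) → D = 0)
    {D : V →ₗ[K] Module.End K V} (hD : ∀ x, D x ∈ H) (hsym : ∀ u w : P, D u w = D w u)
    (u : P) : D u ∈ vanishingOn H P := by
  have hD₀ := hK1 (D.compl₁₂ P.subtype P.subtype) hsym fun u => ⟨D u, hD u, fun _ => rfl⟩
  exact ⟨hD u, fun w => LinearMap.congr_fun₂ hD₀ u w⟩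

theorem exists_decomposition_of_symm
    (hK1 : ∀ D : P →ₗ[K] P →ₗ[K] V, (∀ u w, D u w = D w u) →
      (∀ u, ∃ F ∈ H, ∀ w : P, F w = D u w) → D = 0)
    (hh1 : ∀ F ∈ vanishingOn H P, ∀ x, F x ∈ P) (e : V)
    {D : V →ₗ[K] Module.End K V} (hD : ∀ x, D x ∈ H) (hsym : ∀ u w : P, D u w = D w u)
    (hT₂ : ∀ u : P, D e u - D u e ∈ P) :
    ∃ F ∈ H, (∀ u ∈ P, F u ∈ P) ∧
      ∃ G₂ : P →ₗ[K] V, (∀ u : P, ∃ F₁ ∈ H, (∀ w : P, F₁ w = 0) ∧ G₂ u = F₁ e) ∧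
        ∀ u : P, D e u - D u e = F u + G₂ u := by
  have hD₁ := apply_mem_vanishingOn_of_symm hK1 hD hsym
  refine ⟨D e, hD e, fun u hu => ?_, -(D.flip e ∘ₗ P.subtype), fun u => ?_, fun u => ?_⟩
  · rw [← sub_add_cancel (D e u) (D u e)]
    exact P.add_mem (hT₂ ⟨u, hu⟩) (hh1 _ (hD₁ ⟨u, hu⟩) e)
  · exact ⟨-D u, H.neg_mem (hD₁ u).1, fun w => by simp [(hD₁ u).2 w], by simp⟩
  · simp [sub_eq_add_neg]

end

def projKerAlong (f : Module.Dual K V) {e : V} (hfe : f e = 1) : V →ₗ[K] ker f :=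
  (LinearMap.id - f.smulRight e).codRestrict (ker f) fun x => by simp [hfe]

section

variable {f : Module.Dual K V} {e : V} (hfe : f e = 1)

@[simp] theorem projKerAlong_apply_coe (x : V) : (projKerAlong f hfe x : V) = x - f x • e := rfl

theorem projKerAlong_of_mem (u : ker f) : projKerAlong f hfe u = u := by
  ext; simp

theorem projKerAlong_self : projKerAlong f hfe e = 0 := by
  ext; simp [hfe]

end

theorem exists_symm_of_decomposition (f : Module.Dual K V) {e : V} (hfe : f e = 1)
    {H : Submodule K (Module.End K V)} (hh1 : ∀ F ∈ vanishingOn H (ker f), ∀ x, F x ∈ ker f)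
    {F : Module.End K V} (hF : F ∈ H) (hFP : ∀ u ∈ ker f, F u ∈ ker f) {G₂ : ker f →ₗ[K] V}
    (hG₂ : ∀ u : ker f, ∃ F₁ ∈ H, (∀ w : ker f, F₁ w = 0) ∧ G₂ u = F₁ e) :
    ∃ D : V →ₗ[K] Module.End K V, (∀ x, D x ∈ H) ∧ (∀ u w : ker f, D u w = D w u) ∧
      (∀ u : ker f, D e u - D u e ∈ ker f) ∧ ∀ u : ker f, D e u - D u e = F u + G₂ u := by
  obtain ⟨C, hC⟩ := LinearMap.exists_comp_eq_of_range_le_s16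
    (applyₗ e ∘ₗ (vanishingOn H (ker f)).subtype) G₂ (by
      rintro _ ⟨u, rfl⟩
      obtain ⟨F₁, hF₁, hvan, hu⟩ := hG₂ u
      exact ⟨⟨F₁, hF₁, hvan⟩, hu.symm⟩)
  have hCe (u : ker f) : (C u : Module.End K V) e = G₂ u := LinearMap.congr_fun hC u
  let D := f.smulRight F - (vanishingOn H (ker f)).subtype ∘ₗ C ∘ₗ projKerAlong f hfe
  have hDe : D e = F := by simp [D, hfe, projKerAlong_self]
  have hDu (u : ker f) : D u = -(C u : Module.End K V) := by
    simp [D, projKerAlong_of_mem]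
  have hT (u : ker f) : D e u - D u e = F u + G₂ u := by simp [hDe, hDu, hCe]
  refine ⟨D, fun x => H.sub_mem (H.smul_mem _ hF) (C _).2.1, fun u w => ?_,
    fun u => ?_, hT⟩
  · simp [hDu, (C u).2.2 w, (C w).2.2 u]
  · rw [hT]
    exact (ker f).add_mem (hFP _ u.2) (hCe u ▸ hh1 _ (C u).2 e)

attribute [local instance] LieRing.ofAssociativeRing

theorem stmt_16 {n : ℕ}
    (h : LieSubalgebra ℝ (Module.End ℝ (Fin (n+1) → ℝ)))
    (P : Submodule ℝ (Fin (n+1) → ℝ))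
    (hP : P = LinearMap.ker (LinearMap.proj (Fin.last n) : (Fin (n+1) → ℝ) →ₗ[ℝ] ℝ))
    (e : Fin (n+1) → ℝ) (he : e = Pi.single (Fin.last n) 1)
    (hK1 : ∀ D : P →ₗ[ℝ] P →ₗ[ℝ] (Fin (n+1) → ℝ), (∀ u w : P, D u w = D w u) →
      (∀ u : P, ∃ F ∈ h, ∀ w : P, F (w : Fin (n+1) → ℝ) = D u w) → D = 0)
    (hh1 : ∀ F ∈ h, (∀ u : P, F (u : Fin (n+1) → ℝ) = 0) → ∀ x, F x ∈ P) :
    ∀ G : P →ₗ[ℝ] (Fin (n+1) → ℝ),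
      ((∃ D : (Fin (n+1) → ℝ) →ₗ[ℝ] Module.End ℝ (Fin (n+1) → ℝ),
          (∀ x, D x ∈ h) ∧
          (∀ u w : P, D (u : Fin (n+1) → ℝ) (w : Fin (n+1) → ℝ)
            = D (w : Fin (n+1) → ℝ) (u : Fin (n+1) → ℝ)) ∧
          (∀ u : P, D e (u : Fin (n+1) → ℝ) - D (u : Fin (n+1) → ℝ) e ∈ P) ∧
          (∀ u : P, G u = D e (u : Fin (n+1) → ℝ) - D (u : Fin (n+1) → ℝ) e)) ↔
        (∃ F ∈ h, (∀ u ∈ P, F u ∈ P) ∧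
          ∃ G₂ : P →ₗ[ℝ] (Fin (n+1) → ℝ),
            (∀ u : P, ∃ F₁ ∈ h, (∀ w : P, F₁ (w : Fin (n+1) → ℝ) = 0) ∧ G₂ u = F₁ e) ∧
            ∀ u : P, G u = F (u : Fin (n+1) → ℝ) + G₂ u)) := by
  subst hP he
  have hh1' : ∀ F ∈ vanishingOn h.toSubmodule _, ∀ x, F x ∈ _ := fun F hF => hh1 F hF.1 hF.2
  intro G
  constructor
  · rintro ⟨D, hD, hsym, hT₂, hG⟩
    obtain ⟨F, hF, hFP, G₂, hG₂, hT⟩ := exists_decomposition_of_symm hK1 hh1' _ hD hsym hT₂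
    exact ⟨F, hF, hFP, G₂, hG₂, fun u => (hG u).trans (hT u)⟩
  · rintro ⟨F, hF, hFP, G₂, hG₂, hG⟩
    obtain ⟨D, hD, hsym, hT₂, hT⟩ := exists_symm_of_decomposition _ (by simp) hh1' hF hFP hG₂
    exact ⟨D, hD, hsym, hT₂, fun u => (hG u).trans (hT u).symm⟩
end

section
/- Let h ⊆ gl(n,R) be an elliptic Lie subalgebra (no nonzero element of rank ≤ 1) with K_h^{(1)} = {0}. Then F_h = k̃_h, where F_h = T_1(ker T_2) as defined from the space D_h of h-valued 'pre-connections' symmetric on R^{n-1}, and k̃_h = {F|_{R^{n-1}} : F ∈ h, F(R^{n-1}) ⊆ R^{n-1}}. Consequently every ∇ ∈ D_h with (∇_{e_n} − ∇_{(·)}e_n)(R^{n-1}) ⊆ R^{n-1} has (∇_{e_n} − ∇_{(·)}e_n)|_{R^{n-1}} ∈ k̃_h. -/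
/-!
The restriction of a pre-connection `D` to the hyperplane `P = ker φ` is a symmetric bilinear
map whose partial maps lie in `h`, so it vanishes since `K_h^{(1)} = 0`. Each `D u` with `u ∈ P` then
kills `P` and has rank at most one, hence vanishes by ellipticity. What remains of
`D e u - D u e` is `D e u`, an element of `h` preserving `P`. Conversely `F ∈ h` preserving `P`
is realised by the pre-connection `x ↦ φ x • F`.
-/

open Module LinearMap

section Hyperplane

variable {K V W : Type*} [Field K] [AddCommGroup V] [Module K V] [AddCommGroup W] [Module K W]
  {φ : V →ₗ[K] K} {e : V}

theorem LinearMap.eq_smulRight_of_ker_le (he : φ e = 1) {A : V →ₗ[K] W} (hA : ker φ ≤ ker A) :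
    A = φ.smulRight (A e) := by
  ext x
  have hx : A (x - φ x • e) = 0 := hA (by simp [he])
  rw [map_sub, map_smul, sub_eq_zero] at hx
  simpa using hx

theorem LinearMap.finrank_range_le_one_of_ker_le (he : φ e = 1) {A : V →ₗ[K] W}
    (hA : ker φ ≤ ker A) : finrank K (range A) ≤ 1 := by
  have hφ : φ ≠ 0 := fun h0 => by simp [h0] at he
  rw [eq_smulRight_of_ker_le he hA, range_smulRight_apply hφ]
  simpa using finrank_span_le_card ({A e} : Set W)

end Hyperplane

section Preconnection

variable {K V : Type*} [Field K] [AddCommGroup V] [Module K V]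

/-- The paper's condition `K_S^{(1)} = 0` for the hyperplane `P`. -/
def TrivialProlongation (S : Submodule K (Module.End K V)) (P : Submodule K V) : Prop :=
  ∀ B : P →ₗ[K] P →ₗ[K] V, (∀ u w, B u w = B w u) →
    (∀ u, ∃ F ∈ S, ∀ w : P, F w = B u w) → B = 0

def IsElliptic (S : Submodule K (Module.End K V)) : Prop :=
  ∀ F ∈ S, finrank K (range F) ≤ 1 → F = 0

variable {S : Submodule K (Module.End K V)} {D : V →ₗ[K] Module.End K V}

theorem TrivialProlongation.apply_apply_eq_zero {P : Submodule K V}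
    (hS : TrivialProlongation S P) (hDS : ∀ x, D x ∈ S) (hsym : ∀ u w : P, D u w = D w u)
    (u w : P) : D u w = 0 := by
  have hB := hS ((LinearMap.lcomp K _ P.subtype).comp (D.comp P.subtype)) hsym
    fun u => ⟨D u, hDS u, fun w => rfl⟩
  exact congr($hB u w)

variable {φ : V →ₗ[K] K} {e : V}

theorem IsElliptic.apply_eq_zero_of_mem_ker (hell : IsElliptic S) (he : φ e = 1)
    (hS : TrivialProlongation S (ker φ)) (hDS : ∀ x, D x ∈ S)
    (hsym : ∀ u w : ker φ, D u w = D w u) {u : V} (hu : u ∈ ker φ) : D u = 0 :=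
  hell _ (hDS u) <| finrank_range_le_one_of_ker_le he fun w hw =>
    hS.apply_apply_eq_zero hDS hsym ⟨u, hu⟩ ⟨w, hw⟩

theorem IsElliptic.exists_mem_eq_sub_of_symm (hell : IsElliptic S) (he : φ e = 1)
    (hS : TrivialProlongation S (ker φ)) (hDS : ∀ x, D x ∈ S)
    (hsym : ∀ u w : ker φ, D u w = D w u) (hT : ∀ u : ker φ, D e u - D u e ∈ ker φ) :
    ∃ F ∈ S, (∀ u ∈ ker φ, F u ∈ ker φ) ∧ ∀ u : ker φ, D e u - D u e = F u := by
  have hT_eq : ∀ u : ker φ, D e u - D u e = D e u := fun u => by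
    simp [hell.apply_eq_zero_of_mem_ker he hS hDS hsym u.2]
  exact ⟨D e, hDS e, fun u hu => hT_eq ⟨u, hu⟩ ▸ hT ⟨u, hu⟩, hT_eq⟩

theorem smulRight_mem_symm_sub_eq (he : φ e = 1) {F : Module.End K V} (hF : F ∈ S) :
    (∀ x, φ.smulRight F x ∈ S) ∧
      (∀ u w : ker φ, φ.smulRight F u w = φ.smulRight F w u) ∧
      ∀ u : ker φ, φ.smulRight F e u - φ.smulRight F u e = F u := by
  refine ⟨fun x => S.smul_mem _ hF, fun u w => ?_, fun u => ?_⟩ <;>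
    simp [LinearMap.mem_ker.mp u.2, he]

end Preconnection

attribute [local instance 100] LieRing.ofAssociativeRing

theorem stmt_17 {n : ℕ}
    (h : LieSubalgebra ℝ (Module.End ℝ (Fin (n+1) → ℝ)))
    (P : Submodule ℝ (Fin (n+1) → ℝ))
    (hP : P = LinearMap.ker (LinearMap.proj (Fin.last n) : (Fin (n+1) → ℝ) →ₗ[ℝ] ℝ))
    (e : Fin (n+1) → ℝ) (he : e = Pi.single (Fin.last n) 1)
    (hK1 : ∀ D : P →ₗ[ℝ] P →ₗ[ℝ] (Fin (n+1) → ℝ), (∀ u w : P, D u w = D w u) →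
      (∀ u : P, ∃ F ∈ h, ∀ w : P, F (w : Fin (n+1) → ℝ) = D u w) → D = 0)
    (hell : ∀ F ∈ h, Module.finrank ℝ ↥(LinearMap.range F) ≤ 1 → F = 0) :
    (∀ G : P →ₗ[ℝ] (Fin (n+1) → ℝ),
      ((∃ D : (Fin (n+1) → ℝ) →ₗ[ℝ] Module.End ℝ (Fin (n+1) → ℝ),
          (∀ x, D x ∈ h) ∧
          (∀ u w : P, D (u : Fin (n+1) → ℝ) (w : Fin (n+1) → ℝ)
            = D (w : Fin (n+1) → ℝ) (u : Fin (n+1) → ℝ)) ∧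
          (∀ u : P, D e (u : Fin (n+1) → ℝ) - D (u : Fin (n+1) → ℝ) e ∈ P) ∧
          (∀ u : P, G u = D e (u : Fin (n+1) → ℝ) - D (u : Fin (n+1) → ℝ) e)) ↔
        (∃ F ∈ h, (∀ u ∈ P, F u ∈ P) ∧ ∀ u : P, G u = F (u : Fin (n+1) → ℝ)))) ∧
    (∀ D : (Fin (n+1) → ℝ) →ₗ[ℝ] Module.End ℝ (Fin (n+1) → ℝ),
      (∀ x, D x ∈ h) →
      (∀ u w : P, D (u : Fin (n+1) → ℝ) (w : Fin (n+1) → ℝ)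
        = D (w : Fin (n+1) → ℝ) (u : Fin (n+1) → ℝ)) →
      (∀ u : P, D e (u : Fin (n+1) → ℝ) - D (u : Fin (n+1) → ℝ) e ∈ P) →
      ∃ F ∈ h, (∀ u ∈ P, F u ∈ P) ∧
        ∀ u : P, D e (u : Fin (n+1) → ℝ) - D (u : Fin (n+1) → ℝ) e
          = F (u : Fin (n+1) → ℝ)) := by
  subst hP he
  have hφe : (LinearMap.proj (Fin.last n) : (Fin (n+1) → ℝ) →ₗ[ℝ] ℝ)
      (Pi.single (Fin.last n) 1) = 1 := by simp
  have forward := fun D => IsElliptic.exists_mem_eq_sub_of_symm (S := h.toSubmodule) (D := D)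
    hell hφe hK1
  refine ⟨fun G => ⟨?_, ?_⟩, forward⟩
  · rintro ⟨D, hDh, hsym, hT, hG⟩
    obtain ⟨F, hFh, hFP, hF⟩ := forward D hDh hsym hT
    exact ⟨F, hFh, hFP, fun u => (hG u).trans (hF u)⟩
  · rintro ⟨F, hFh, hFP, hG⟩
    obtain ⟨hDh, hsym, hT⟩ := smulRight_mem_symm_sub_eq (S := h.toSubmodule) hφe hFh
    exact ⟨_, hDh, hsym, fun u => (hT u).symm ▸ hFP u u.2, fun u => (hG u).trans (hT u).symm⟩
end

section
/- Let H be a Lie subgroup of GL(n,R) with Lie algebra h and let K̃_H = {h|_{R^{n-1}} : h ∈ H, h(R^{n-1}) = R^{n-1}} acting on End(R^{n-1}) by conjugation. Then the subspace F_h = T_1(ker T_2) ⊆ End(R^{n-1}) is invariant under conjugation by elements of K̃_H: if k ∈ GL(n-1,R) arises as the restriction of some h ∈ H preserving R^{n-1}, and F ∈ F_h, then k^{-1} ∘ F ∘ k ∈ F_h. -/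
attribute [local instance 100] LieRing.ofAssociativeRing

/-!
The pullback `a^*D = a⁻¹ ∘ D_{a(·)} ∘ a` stays in `D_h` and satisfies
`T_{a⁻¹e}(a^*D) = a⁻¹ ∘ T_e(D) ∘ a`. Since `a⁻¹e = c e + q` with `q` in the hyperplane and
`D` is symmetric there, `T_{a⁻¹e} = c T_e`, so `c • a^*D` realises the conjugate of `T_e(D)`.
-/

section Torsion

variable {K V : Type*} [Field K] [AddCommGroup V] [Module K V]

def torsionAlong (D : V →ₗ[K] Module.End K V) (v u : V) : V := D v u - D u v

/-- The space `F_h = T₁(ker T₂)`: the condition `T_e D u ∈ P` says `T₂(D) = 0`, and then `T₁(D)`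
is `T_e D` read as a map `P → V`. -/
def torsionSpace (h : Submodule K (Module.End K V)) (P : Submodule K V) (e : V) :
    Set (P →ₗ[K] V) :=
  {F | ∃ D : V →ₗ[K] Module.End K V, (∀ x, D x ∈ h) ∧ (∀ u w : P, D u w = D w u) ∧
    (∀ u : P, torsionAlong D e u ∈ P) ∧ ∀ u : P, F u = torsionAlong D e u}

def pullback (a : (Module.End K V)ˣ) (D : V →ₗ[K] Module.End K V) : V →ₗ[K] Module.End K V :=
  (LinearMap.mulRight K (a : Module.End K V) ∘ₗ LinearMap.mulLeft K (↑a⁻¹ : Module.End K V))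
    ∘ₗ D ∘ₗ (a : Module.End K V)

theorem pullback_apply_apply (a : (Module.End K V)ˣ) (D : V →ₗ[K] Module.End K V) (x y : V) :
    pullback a D x y =
      (↑a⁻¹ : Module.End K V) (D ((a : Module.End K V) x) ((a : Module.End K V) y)) :=
  rfl

theorem torsionAlong_smul (c : K) (D : V →ₗ[K] Module.End K V) (v u : V) :
    torsionAlong (c • D) v u = c • torsionAlong D v u :=
  (smul_sub c _ _).symm

theorem torsionAlong_pullback (a : (Module.End K V)ˣ) (D : V →ₗ[K] Module.End K V) (v u : V) :
    torsionAlong (pullback a D) ((↑a⁻¹ : Module.End K V) v) u =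
      (↑a⁻¹ : Module.End K V) (torsionAlong D v ((a : Module.End K V) u)) := by
  have hv : (a : Module.End K V) ((↑a⁻¹ : Module.End K V) v) = v := by
    rw [← Module.End.mul_apply, Units.mul_inv, Module.End.one_apply]
  simp only [torsionAlong, pullback_apply_apply, hv, map_sub]

theorem pullback_symm {P : Submodule K V} {a : (Module.End K V)ˣ}
    (haP : ∀ x ∈ P, (a : Module.End K V) x ∈ P)
    {D : V →ₗ[K] Module.End K V} (hsym : ∀ u w : P, D u w = D w u) (u w : P) :
    pullback a D u w = pullback a D w u := by
  simp only [pullback_apply_apply, hsym ⟨_, haP _ u.2⟩ ⟨_, haP _ w.2⟩]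

theorem torsionAlong_smul_add_of_mem {P : Submodule K V} {D : V →ₗ[K] Module.End K V}
    (hsym : ∀ u w : P, D u w = D w u) (c : K) (v : V) {q : V} (hq : q ∈ P) (u : P) :
    torsionAlong D (c • v + q) u = c • torsionAlong D v u := by
  have hqu : D q u = D u q := hsym ⟨q, hq⟩ u
  simp only [torsionAlong, map_add, map_smul, LinearMap.add_apply, LinearMap.smul_apply, hqu,
    smul_sub]
  abel

theorem sub_smul_mem_ker {φ : V →ₗ[K] K} {e : V} (he : φ e = 1) (v : V) :
    v - φ v • e ∈ LinearMap.ker φ := by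
  simp [he]

theorem conj_mem_torsionSpace {h : Submodule K (Module.End K V)} {φ : V →ₗ[K] K} {e : V}
    (he : φ e = 1) {a : (Module.End K V)ˣ}
    (hAd : ∀ F ∈ h, (↑a⁻¹ : Module.End K V) * F * (a : Module.End K V) ∈ h)
    (haP : ∀ x ∈ LinearMap.ker φ, (a : Module.End K V) x ∈ LinearMap.ker φ)
    (haP' : ∀ x ∈ LinearMap.ker φ, (↑a⁻¹ : Module.End K V) x ∈ LinearMap.ker φ)
    {F G : LinearMap.ker φ →ₗ[K] V} (hF : F ∈ torsionSpace h (LinearMap.ker φ) e)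
    (hG : ∀ u : LinearMap.ker φ, (a : Module.End K V) (G u)
      = F ⟨(a : Module.End K V) u, haP _ u.2⟩) :
    G ∈ torsionSpace h (LinearMap.ker φ) e := by
  obtain ⟨D, hDh, hsym, hDP, hDF⟩ := hF
  set v := (↑a⁻¹ : Module.End K V) e
  set c := φ v
  have hG' (u : LinearMap.ker φ) :
      G u = (↑a⁻¹ : Module.End K V) (torsionAlong D e ((a : Module.End K V) u)) := by
    rw [← hDF ⟨_, haP _ u.2⟩, ← hG u, ← Module.End.mul_apply, Units.inv_mul,
      Module.End.one_apply]
  have hT (u : LinearMap.ker φ) : torsionAlong (c • pullback a D) e u = G u := by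
    rw [torsionAlong_smul, ← torsionAlong_smul_add_of_mem (pullback_symm haP hsym) c e
      (sub_smul_mem_ker he v), add_sub_cancel, torsionAlong_pullback, hG']
  refine ⟨c • pullback a D, fun x => h.smul_mem c (hAd _ (hDh _)), fun u w => ?_,
    fun u => ?_, fun u => (hT u).symm⟩
  · simp only [LinearMap.smul_apply, pullback_symm haP hsym u w]
  · rw [hT, hG']
    exact haP' _ (hDP ⟨_, haP _ u.2⟩)

end Torsion

theorem stmt_18 {n : ℕ}
    (H : Subgroup (Module.End ℝ (Fin (n+1) → ℝ))ˣ)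
    (h : LieSubalgebra ℝ (Module.End ℝ (Fin (n+1) → ℝ)))
    (hAd : ∀ a ∈ H, ∀ F ∈ h,
      (↑a⁻¹ : Module.End ℝ (Fin (n+1) → ℝ)) * F * (↑a : Module.End ℝ (Fin (n+1) → ℝ)) ∈ h)
    (P : Submodule ℝ (Fin (n+1) → ℝ))
    (hP : P = LinearMap.ker (LinearMap.proj (Fin.last n) : (Fin (n+1) → ℝ) →ₗ[ℝ] ℝ))
    (e : Fin (n+1) → ℝ) (he : e = Pi.single (Fin.last n) 1)
    (a : (Module.End ℝ (Fin (n+1) → ℝ))ˣ) (haH : a ∈ H)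
    (haP : ∀ x ∈ P, (↑a : Module.End ℝ (Fin (n+1) → ℝ)) x ∈ P)
    (haP' : ∀ x ∈ P, (↑a⁻¹ : Module.End ℝ (Fin (n+1) → ℝ)) x ∈ P) :
    ∀ F G : P →ₗ[ℝ] (Fin (n+1) → ℝ),
      (∃ D : (Fin (n+1) → ℝ) →ₗ[ℝ] Module.End ℝ (Fin (n+1) → ℝ),
        (∀ x, D x ∈ h) ∧
        (∀ u w : P, D (u : Fin (n+1) → ℝ) (w : Fin (n+1) → ℝ)
          = D (w : Fin (n+1) → ℝ) (u : Fin (n+1) → ℝ)) ∧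
        (∀ u : P, D e (u : Fin (n+1) → ℝ) - D (u : Fin (n+1) → ℝ) e ∈ P) ∧
        (∀ u : P, F u = D e (u : Fin (n+1) → ℝ) - D (u : Fin (n+1) → ℝ) e)) →
      (∀ u : P, (↑a : Module.End ℝ (Fin (n+1) → ℝ)) (G u)
        = F ⟨(↑a : Module.End ℝ (Fin (n+1) → ℝ)) (u : Fin (n+1) → ℝ), haP _ u.2⟩) →
      (∃ D : (Fin (n+1) → ℝ) →ₗ[ℝ] Module.End ℝ (Fin (n+1) → ℝ),
        (∀ x, D x ∈ h) ∧
        (∀ u w : P, D (u : Fin (n+1) → ℝ) (w : Fin (n+1) → ℝ)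
          = D (w : Fin (n+1) → ℝ) (u : Fin (n+1) → ℝ)) ∧
        (∀ u : P, D e (u : Fin (n+1) → ℝ) - D (u : Fin (n+1) → ℝ) e ∈ P) ∧
        (∀ u : P, G u = D e (u : Fin (n+1) → ℝ) - D (u : Fin (n+1) → ℝ) e)) := by
  intro F G hF hG
  subst hP he
  exact conj_mem_torsionSpace (φ := LinearMap.proj (Fin.last n)) (by simp) (hAd a haH) haP haP'
    hF hG
end
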